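/- arXiv:0907.5223 — 10 statements merged into one kernel-verified Lean document; each statement's English description precedes it below -/
import Mathlib

section
/- There exists n₀ ∈ ℕ such that for every n ≥ n₀ there is a convex body K in ℝⁿ and a finite family 𝓕 of translates of K such that ν(𝓕) = 1 (i.e., any two members of 𝓕 intersect) and every transversal of 𝓕 has cardinality at least (1/2)·(1.058)ⁿ; in particular τ(𝓕) ≥ (1/2)·(1.058)ⁿ·ν(𝓕). -/
/-!
Take for `K` the simplex `{x ≥ 0, ∑ xᵢ ≤ w}` in `ℝⁿ` with `w = ⌊n / 10⌋`, translated by the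
indicator vectors `1_S` of all `w`-subsets `S`. Two translates `K + 1_A`, `K + 1_B` meet at
`1_{A ∪ B}`. A point `x` lies in `K + 1_S` only if `S ⊆ {i | 1 ≤ xᵢ}`, a set of at most `2w`
coordinates since `∑ xᵢ ≤ 2w`; so `x` pierces at most `4^w` translates, and a transversal has at
least `C(n, w) / 4^w ≥ (10 / 4)^w ≥ 1.058ⁿ / 2` points.
-/

open Pointwise Finset

theorem Nat.pow_le_choose_of_mul_le {c k n : ℕ} (h : c * k ≤ n) : c ^ k ≤ n.choose k := by
  induction k generalizing n with
  | zero => simp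
  | succ k ih =>
    rcases Nat.eq_zero_or_pos c with rfl | hc
    · simp
    obtain ⟨m, rfl⟩ : ∃ m, n = m + 1 := ⟨n - 1, by rw [Nat.mul_succ] at h; omega⟩
    refine Nat.le_of_mul_le_mul_right ?_ k.succ_pos
    calc c ^ (k + 1) * (k + 1) = c * (k + 1) * c ^ k := by ring
      _ ≤ (m + 1) * m.choose k := Nat.mul_le_mul h (ih (by nlinarith))
      _ = (m + 1).choose (k + 1) * (k + 1) := m.add_one_mul_choose_eq k

section IndicatorVec

variable {ι : Type*} [DecidableEq ι]

def indicatorVec (S : Finset ι) : EuclideanSpace ℝ ι :=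
  WithLp.toLp 2 fun i => if i ∈ S then 1 else 0

@[simp] theorem indicatorVec_apply (S : Finset ι) (i : ι) :
    indicatorVec S i = if i ∈ S then 1 else 0 := rfl

end IndicatorVec

section CornerSimplex

variable {ι : Type*} [Fintype ι]

def cornerSimplex (r : ℝ) : Set (EuclideanSpace ℝ ι) := {x | (∀ i, 0 ≤ x i) ∧ ∑ i, x i ≤ r}

theorem cornerSimplex_eq (r : ℝ) :
    cornerSimplex r = (⋂ i, {x : EuclideanSpace ℝ ι | 0 ≤ x i}) ∩ {x | ∑ i, x i ≤ r} := by
  ext; simp [cornerSimplex]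

theorem convex_cornerSimplex (r : ℝ) : Convex ℝ (cornerSimplex (ι := ι) r) := by
  rw [cornerSimplex_eq]
  exact (convex_iInter fun i => convex_halfSpace_ge (EuclideanSpace.proj i).isLinear 0).inter
    (convex_halfSpace_le (f := fun x : EuclideanSpace ℝ ι => ∑ i, x i)
      ⟨fun x y => by simp [sum_add_distrib], fun c x => by simp [mul_sum]⟩ r)

theorem isClosed_cornerSimplex (r : ℝ) : IsClosed (cornerSimplex (ι := ι) r) := by
  rw [cornerSimplex_eq]
  exact (isClosed_iInter fun i => isClosed_le continuous_const (by fun_prop)).inter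
    (isClosed_le (by fun_prop) continuous_const)

theorem cornerSimplex_subset_closedBall (r : ℝ) :
    cornerSimplex (ι := ι) r ⊆ Metric.closedBall 0 r := by
  rintro x ⟨hx₀, hxr⟩
  have hsum : 0 ≤ ∑ i, x i := sum_nonneg fun i _ => hx₀ i
  rw [mem_closedBall_zero_iff, ← sq_le_sq₀ (norm_nonneg x) (hsum.trans hxr),
    EuclideanSpace.real_norm_sq_eq]
  exact (sum_sq_le_sq_sum_of_nonneg fun i _ => hx₀ i).trans (pow_le_pow_left₀ hsum hxr 2)

theorem isCompact_cornerSimplex (r : ℝ) : IsCompact (cornerSimplex (ι := ι) r) :=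
  (isCompact_closedBall 0 r).of_isClosed_subset (isClosed_cornerSimplex r)
    (cornerSimplex_subset_closedBall r)

theorem interior_cornerSimplex_nonempty {r : ℝ} (hr : 0 < r) :
    (interior (cornerSimplex (ι := ι) r)).Nonempty := by
  set U : Set (EuclideanSpace ℝ ι) := (⋂ i, {x | 0 < x i}) ∩ {x | ∑ i, x i < r}
  have hU : IsOpen U :=
    (isOpen_iInter_of_finite fun i => isOpen_lt continuous_const (by fun_prop)).inter
      (isOpen_lt (by fun_prop) continuous_const)
  have hUK : U ⊆ cornerSimplex r := fun x ⟨hx₀, hxr⟩ =>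
    ⟨fun i => (Set.mem_iInter.1 hx₀ i).le, le_of_lt hxr⟩
  set ε := r / (Fintype.card ι + 1)
  refine ⟨WithLp.toLp 2 fun _ => ε, interior_maximal hUK hU ⟨Set.mem_iInter.2 fun _ => ?_, ?_⟩⟩
  · show 0 < ε
    positivity
  · show ∑ _i : ι, ε < r
    rw [sum_const, card_univ, nsmul_eq_mul, mul_div_assoc', div_lt_iff₀ (by positivity)]
    nlinarith

theorem mem_cornerSimplex_add_singleton {r : ℝ} {x v : EuclideanSpace ℝ ι} :
    x ∈ cornerSimplex r + {v} ↔ (∀ i, v i ≤ x i) ∧ ∑ i, x i ≤ r + ∑ i, v i := by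
  simp [Set.add_singleton, Set.image_add_right, cornerSimplex, ← sub_eq_add_neg, sum_sub_distrib]

variable [DecidableEq ι]

@[simp] theorem sum_indicatorVec (S : Finset ι) : ∑ i, indicatorVec S i = #S := by
  simp [sum_ite_mem]

theorem indicatorVec_union_mem_cornerSimplex_add {r : ℝ} (A : Finset ι) {B : Finset ι}
    (hB : #B ≤ r) : indicatorVec (A ∪ B) ∈ cornerSimplex r + {indicatorVec A} := by
  refine mem_cornerSimplex_add_singleton.2 ⟨fun i => ?_, ?_⟩
  · by_cases hA : i ∈ A <;> by_cases hB : i ∈ B <;> simp [hA, hB]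
  · have : (#(A ∪ B) : ℝ) ≤ #A + #B := by exact_mod_cast card_union_le A B
    simp only [sum_indicatorVec]
    linarith

theorem subset_filter_one_le_of_mem_cornerSimplex_add {r : ℝ} {S : Finset ι}
    {x : EuclideanSpace ℝ ι} (hx : x ∈ cornerSimplex r + {indicatorVec S}) :
    S ⊆ univ.filter (1 ≤ x ·) := fun i hi => by
  simpa [hi] using (mem_cornerSimplex_add_singleton.1 hx).1 i

theorem card_filter_one_le_le_of_mem_cornerSimplex_add {r : ℝ} {S : Finset ι}
    {x : EuclideanSpace ℝ ι} (hx : x ∈ cornerSimplex r + {indicatorVec S}) :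
    (#(univ.filter (1 ≤ x ·)) : ℝ) ≤ r + #S := by
  obtain ⟨hSx, hxr⟩ := mem_cornerSimplex_add_singleton.1 hx
  have hx₀ : ∀ i, 0 ≤ x i := fun i =>
    le_trans (by rw [indicatorVec_apply]; split_ifs <;> norm_num) (hSx i)
  calc (#(univ.filter (1 ≤ x ·)) : ℝ) = ∑ i ∈ univ.filter (1 ≤ x ·), 1 := by simp
    _ ≤ ∑ i ∈ univ.filter (1 ≤ x ·), x i := sum_le_sum fun i hi => (mem_filter.1 hi).2
    _ ≤ ∑ i, x i := sum_le_sum_of_subset_of_nonneg (subset_univ _) fun i _ _ => hx₀ i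
    _ ≤ r + #S := by simpa using hxr

open Classical in
theorem card_filter_mem_cornerSimplex_add_le (r k : ℕ) (x : EuclideanSpace ℝ ι) :
    #((powersetCard k univ).filter (x ∈ cornerSimplex r + {indicatorVec ·})) ≤ 2 ^ (r + k) := by
  set F := (powersetCard k univ).filter (x ∈ cornerSimplex r + {indicatorVec ·})
  obtain hF | ⟨S₀, hS₀⟩ := F.eq_empty_or_nonempty
  · simp [hF]
  obtain ⟨hS₀k, hxS₀⟩ := mem_filter.1 hS₀
  have hU : #(univ.filter (1 ≤ x ·)) ≤ r + k := by
    have := card_filter_one_le_le_of_mem_cornerSimplex_add hxS₀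
    rw [(mem_powersetCard.1 hS₀k).2] at this
    exact_mod_cast this
  calc #F ≤ #(univ.filter (1 ≤ x ·)).powerset := card_le_card fun S hS =>
        mem_powerset.2 (subset_filter_one_le_of_mem_cornerSimplex_add (mem_filter.1 hS).2)
    _ ≤ 2 ^ (r + k) := by
        rw [card_powerset]; exact Nat.pow_le_pow_right two_pos hU

theorem choose_le_card_mul_of_forall_mem_cornerSimplex_add (r k : ℕ)
    {T : Finset (EuclideanSpace ℝ ι)}
    (hT : ∀ S ∈ powersetCard k univ, ∃ x ∈ T, x ∈ cornerSimplex r + {indicatorVec S}) :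
    (Fintype.card ι).choose k ≤ #T * 2 ^ (r + k) := by
  classical
  have := card_mul_le_card_mul (fun S x => x ∈ cornerSimplex (r : ℝ) + {indicatorVec S})
    (s := powersetCard k univ) (t := T) (m := 1) (n := 2 ^ (r + k))
    (fun S hS => by
      obtain ⟨x, hxT, hx⟩ := hT S hS
      exact card_pos.2 ⟨x, mem_filter.2 ⟨hxT, hx⟩⟩)
    (fun x _ => card_filter_mem_cornerSimplex_add_le r k x)
  simpa using this

end CornerSimplex

theorem one_half_mul_pow_le (n : ℕ) : (1 / 2 : ℝ) * 1.058 ^ n ≤ (5 / 2) ^ (n / 10) := by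
  calc (1 / 2 : ℝ) * 1.058 ^ n ≤ 1 / 2 * 1.058 ^ (10 * (n / 10) + 9) := by
        gcongr
        · norm_num
        · omega
    _ = (1.058 ^ 10) ^ (n / 10) * (1 / 2 * 1.058 ^ 9) := by rw [pow_add, pow_mul]; ring
    _ ≤ (5 / 2) ^ (n / 10) * 1 := by gcongr <;> norm_num
    _ = (5 / 2) ^ (n / 10) := mul_one _

/-- For all sufficiently large `n` there is a convex body `K` in `ℝⁿ` and a
finite family of translates of `K`, any two of which intersect (so `ν = 1`), such that every
transversal has cardinality at least `(1/2) · 1.058ⁿ`. -/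
theorem exists_translates_large_transversal_number :
    ∃ n₀ : ℕ, ∀ n : ℕ, n₀ ≤ n →
      ∃ K : Set (EuclideanSpace ℝ (Fin n)),
        IsCompact K ∧ Convex ℝ K ∧ (interior K).Nonempty ∧
        ∃ V : Finset (EuclideanSpace ℝ (Fin n)),
          V.Nonempty ∧
          (∀ v₁ ∈ V, ∀ v₂ ∈ V, ((K + {v₁}) ∩ (K + {v₂})).Nonempty) ∧
          (∀ T : Finset (EuclideanSpace ℝ (Fin n)),
            (∀ v ∈ V, ∃ x ∈ T, x ∈ K + {v}) →
            (1 / 2 : ℝ) * (1.058 : ℝ) ^ n ≤ T.card) := by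
  refine ⟨10, fun n hn => ?_⟩
  set w := n / 10
  have hw : (0 : ℝ) < w := by exact_mod_cast Nat.div_pos hn (by norm_num)
  refine ⟨cornerSimplex w, isCompact_cornerSimplex _, convex_cornerSimplex _,
    interior_cornerSimplex_nonempty hw, (powersetCard w univ).image indicatorVec,
    (powersetCard_nonempty.2 (by simpa using n.div_le_self 10)).image _, ?_, fun T hT => ?_⟩
  · simp only [mem_image, mem_powersetCard]
    rintro _ ⟨A, ⟨-, hA⟩, rfl⟩ _ ⟨B, ⟨-, hB⟩, rfl⟩
    exact ⟨indicatorVec (A ∪ B), indicatorVec_union_mem_cornerSimplex_add A (by simp [hB]),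
      union_comm B A ▸ indicatorVec_union_mem_cornerSimplex_add B (by simp [hA])⟩
  · have hcount : 10 ^ w ≤ #T * 2 ^ (w + w) := by
      have := choose_le_card_mul_of_forall_mem_cornerSimplex_add w w
        fun S hS => hT _ (mem_image_of_mem _ hS)
      rw [Fintype.card_fin] at this
      exact (Nat.pow_le_choose_of_mul_le (Nat.mul_div_le n 10)).trans this
    calc (1 / 2 : ℝ) * 1.058 ^ n ≤ (5 / 2) ^ w := one_half_mul_pow_le n
      _ = 10 ^ w / 2 ^ (w + w) := by rw [pow_add, ← mul_pow, ← div_pow]; norm_num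
      _ ≤ #T := div_le_of_le_mul₀ (by positivity) (Nat.cast_nonneg _) (by exact_mod_cast hcount)
end

section
/- Let K be a convex body in ℝ² and let 𝓕 be a family of positive homothets of K. Then 𝓕 does not shatter any set of 4 points; that is, for every set X ⊆ ℝ² with |X| = 4 there exists a subset X' ⊆ X such that no F ∈ 𝓕 satisfies X ∩ F = X'. Consequently the VC-dimension of 𝓕 is at most 3. -/
/-!
If one of the four points lies in the convex hull of the other three, those three cannot be cut
out by a convex set. Otherwise, by Radon's theorem, the points split into pairs `{A, C}` and
`{B, D}` whose segments cross at some `p`, and no two positive homothets `F₁`, `F₂` can have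
`A, C ∈ F₁ \ F₂` and `B, D ∈ F₂ \ F₁`. Up to swapping, `F₁` is the preimage of `F₂` under
`z ↦ ρ • z + w` with `ρ ≥ 1`. If the four points are collinear, convexity on the line already
gives a contradiction. Otherwise, in the frame `e₁ = C - A`, `e₂ = D - B`, the convex set `F₂`
contains the `e₂`-arms but not the `e₁`-arms of a cross at `p`, and the `e₁`-arms but not the
`e₂`-arms of the cross scaled by `ρ` at `ρ • p + w`; a convex combination of three of the points
known to lie in `F₂` produces one of the excluded ones.
-/

open Pointwise Module

theorem Set.subset_diff_of_inter_eq {α : Type*} {X Y F₁ F₂ : Set α} (h₁ : X ∩ F₁ = Y)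
    (h₂ : X ∩ F₂ = X \ Y) : Y ⊆ F₁ \ F₂ ∧ X \ Y ⊆ F₂ \ F₁ := by
  simp only [Set.ext_iff, Set.mem_inter_iff, Set.mem_sdiff] at h₁ h₂
  constructor <;> intro y hy <;> grind

theorem Convex.inter_ne_diff_singleton {𝕜 E : Type*} [Semiring 𝕜] [PartialOrder 𝕜]
    [AddCommMonoid E] [Module 𝕜 E] {F X : Set E} (hF : Convex 𝕜 F) {q : E} (hqX : q ∈ X)
    (hq : q ∈ convexHull 𝕜 (X \ {q})) : X ∩ F ≠ X \ {q} := by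
  intro h
  have hqF : q ∈ X ∩ F := ⟨hqX, convexHull_min (h ▸ Set.inter_subset_right) hF hq⟩
  rw [h] at hqF
  exact hqF.2 rfl

theorem Finset.two_le_card_of_convexHull_inter_nonempty {𝕜 E : Type*} [Semiring 𝕜]
    [PartialOrder 𝕜] [AddCommGroup E] [Module 𝕜 E] [DecidableEq E] {X S : Finset E}
    (hSX : S ⊆ X) (hX : ∀ q ∈ X, q ∉ convexHull 𝕜 (↑X \ {q}))
    (h : (convexHull 𝕜 (S : Set E) ∩ convexHull 𝕜 ↑(X \ S)).Nonempty) : 2 ≤ S.card := by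
  by_contra! hS
  obtain ⟨q, hq⟩ := Finset.card_le_one_iff_subset_singleton.mp (Nat.le_of_lt_succ hS)
  obtain ⟨p, hpS, hpX⟩ := h
  rcases Finset.subset_singleton_iff.mp hq with rfl | rfl
  · simp at hpS
  · rw [coe_singleton, convexHull_singleton, Set.mem_singleton_iff] at hpS
    subst hpS
    exact hX p (hSX (mem_singleton_self p)) (by simpa using hpX)

section ConvexPosition

variable {𝕜 E : Type*} [Field 𝕜] [LinearOrder 𝕜] [IsStrictOrderedRing 𝕜] [AddCommGroup E]
  [Module 𝕜 E]

theorem Finset.exists_radon_partition [FiniteDimensional 𝕜 E] [DecidableEq E] (X : Finset E)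
    (hX : finrank 𝕜 E + 2 ≤ X.card) :
    ∃ Y ⊆ X, (convexHull 𝕜 (Y : Set E) ∩ convexHull 𝕜 ↑(X \ Y)).Nonempty := by
  classical
  have hdep : ¬ AffineIndependent 𝕜 ((↑) : X → E) := fun hind ↦ by
    have := hind.card_le_finrank_succ
    have := Submodule.finrank_le (vectorSpan 𝕜 (Set.range ((↑) : X → E)))
    simp only [Fintype.card_coe] at *
    omega
  obtain ⟨I, p, hpI, hpIc⟩ := Convex.radon_partition hdep
  refine ⟨X.filter (fun x ↦ ∃ hx : x ∈ X, ⟨x, hx⟩ ∈ I), filter_subset _ _, p,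
    convexHull_mono ?_ hpI, convexHull_mono ?_ hpIc⟩ <;>
  · rintro _ ⟨x, hx, rfl⟩
    simp_all

theorem Finset.exists_crossing_segments [FiniteDimensional 𝕜 E] [DecidableEq E]
    (hE : finrank 𝕜 E = 2) {X : Finset E} (hX : X.card = 4)
    (hpos : ∀ q ∈ X, q ∉ convexHull 𝕜 (↑X \ {q})) :
    ∃ A B C D, {A, C} ⊆ X ∧ X \ {A, C} = {B, D} ∧ (segment 𝕜 A C ∩ segment 𝕜 B D).Nonempty := by
  obtain ⟨Y, hYX, p, hpY, hpZ⟩ := X.exists_radon_partition (𝕜 := 𝕜) (by omega)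
  have hY := two_le_card_of_convexHull_inter_nonempty hYX hpos ⟨p, hpY, hpZ⟩
  have hZ := two_le_card_of_convexHull_inter_nonempty (S := X \ Y) sdiff_subset hpos
    ⟨p, hpZ, by rwa [sdiff_sdiff_eq_self hYX]⟩
  have := card_sdiff_add_card_eq_card hYX
  obtain ⟨A, C, -, rfl⟩ := card_eq_two.mp (by omega : Y.card = 2)
  obtain ⟨B, D, -, hBD⟩ := card_eq_two.mp (by omega : (X \ {A, C}).card = 2)
  rw [hBD, coe_pair, convexHull_pair] at hpZ
  rw [coe_pair, convexHull_pair] at hpY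
  exact ⟨A, B, C, D, hYX, hBD, p, hpY, hpZ⟩

end ConvexPosition

theorem Real.disjoint_segment_of_mem_diff {S T : Set ℝ} (hS : Convex ℝ S) (hT : Convex ℝ T)
    {a b c d : ℝ} (ha : a ∈ S \ T) (hc : c ∈ S) (hb : b ∈ T \ S) (hd : d ∈ T \ S) :
    Disjoint (segment ℝ a c) (segment ℝ b d) := by
  have hac : b ∉ Set.uIcc a c ∧ d ∉ Set.uIcc a c := by
    rw [← segment_eq_uIcc]
    have hacS := hS.segment_subset ha.1 hc
    exact ⟨fun h ↦ hb.2 (hacS h), fun h ↦ hd.2 (hacS h)⟩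
  have hbd : a ∉ Set.uIcc b d := by
    rw [← segment_eq_uIcc]
    exact fun h ↦ ha.2 (hT.segment_subset hb.1 hd.1 h)
  rw [segment_eq_uIcc, segment_eq_uIcc, Set.disjoint_left]
  intro x hx hx'
  simp only [Set.mem_uIcc] at hac hbd hx hx'
  grind

theorem exists_eq_sub_smul_of_mem_openSegment {𝕜 E : Type*} [Ring 𝕜] [PartialOrder 𝕜]
    [AddRightMono 𝕜] [AddCommGroup E] [Module 𝕜 E] {x y p : E} (h : p ∈ openSegment 𝕜 x y) :
    ∃ θ ∈ Set.Ioo (0 : 𝕜) 1, x = p - θ • (y - x) ∧ y = p + (1 - θ) • (y - x) := by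
  rw [openSegment_eq_image'] at h
  obtain ⟨θ, hθ, rfl⟩ := h
  refine ⟨θ, hθ, (add_sub_cancel_right x _).symm, ?_⟩
  rw [add_assoc, ← add_smul, add_sub_cancel, one_smul, add_sub_cancel]

theorem LinearIndependent.exists_smul_add_smul_eq {K V : Type*} [DivisionRing K]
    [AddCommGroup V] [Module K V] {e₁ e₂ : V} (h : LinearIndependent K ![e₁, e₂])
    (hV : finrank K V = 2) (v : V) : ∃ s t : K, s • e₁ + t • e₂ = v := by
  have hspan := h.span_eq_top_of_card_eq_finrank (by simp [hV])
  rw [Matrix.range_cons_cons_empty] at hspan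
  exact Submodule.mem_span_pair.mp (hspan ▸ Submodule.mem_top)

section

variable {V : Type*} [AddCommGroup V] [Module ℝ V]

theorem AffineMap.disjoint_segment_of_mem_diff {F₁ F₂ : Set V} (hF₁ : Convex ℝ F₁)
    (hF₂ : Convex ℝ F₂) {g : ℝ →ᵃ[ℝ] V} (hg : Function.Injective g) {a b c d : ℝ}
    (ha : g a ∈ F₁ \ F₂) (hc : g c ∈ F₁) (hb : g b ∈ F₂ \ F₁) (hd : g d ∈ F₂ \ F₁) :
    Disjoint (segment ℝ (g a) (g c)) (segment ℝ (g b) (g d)) := by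
  rw [← image_segment, ← image_segment, Set.disjoint_image_iff hg]
  exact Real.disjoint_segment_of_mem_diff (hF₁.affine_preimage g) (hF₂.affine_preimage g)
    ha hc hb hd

theorem Convex.smul_add_smul_add_smul_mem {L : Set V} (hL : Convex ℝ L) {x y z : V}
    (hx : x ∈ L) (hy : y ∈ L) (hz : z ∈ L) {a b c : ℝ} (ha : 0 ≤ a) (hb : 0 ≤ b) (hc : 0 ≤ c)
    (habc : a + b + c = 1) : a • x + b • y + c • z ∈ L := by
  have := hL.sum_mem (t := Finset.univ) (w := ![a, b, c]) (z := ![x, y, z])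
    (by intro i _; fin_cases i <;> simpa) (by simp [Fin.sum_univ_three, habc])
    (by intro i _; fin_cases i <;> simpa)
  simpa [Fin.sum_univ_three] using this

theorem Convex.add_smul_mem_or_sub_smul_mem {L : Set V} (hL : Convex ℝ L) {p q e₁ e₂ : V}
    {β γ ρ s t : ℝ} (hβ : 0 < β) (hγ : 0 < γ) (hρ : 1 ≤ ρ) (hs : 0 ≤ s) (ht : 0 ≤ t)
    (hq : q = p + s • e₁ + t • e₂) (hpL : p ∈ L) (hqL : q ∈ L) (hp₂ : p - β • e₂ ∈ L)
    (hq₁ : q + (ρ * γ) • e₁ ∈ L) :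
    p + γ • e₁ ∈ L ∨ q - (ρ * β) • e₂ ∈ L := by
  subst hq
  have hD : 0 < s + ρ * γ := by nlinarith
  rcases le_or_gt (t * γ) (β * s + β * γ * (ρ - 1)) with hc₁ | hc₁
  · left
    have key : p + γ • e₁ =
        (t * γ / (β * (s + ρ * γ))) • (p - β • e₂)
        + ((β * s + β * γ * (ρ - 1) - t * γ) / (β * (s + ρ * γ))) • p
        + (γ / (s + ρ * γ)) • (p + s • e₁ + t • e₂ + (ρ * γ) • e₁) := by
      match_scalars <;> field_simp <;> ring
    rw [key]
    exact hL.smul_add_smul_add_smul_mem hp₂ hpL hq₁ (by positivity)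
      (div_nonneg (by linarith) (by positivity)) (by positivity) (by field_simp; ring)
  right
  rcases le_or_gt (t * γ) (β * s + ρ * β * γ) with hc₂ | hc₂
  · have key : p + s • e₁ + t • e₂ - (ρ * β) • e₂ =
        (ρ * (β * s + ρ * β * γ - t * γ) / (β * (s + ρ * γ))) • (p - β • e₂)
        + (ρ * (t * γ - β * s - β * γ * (ρ - 1)) / (β * (s + ρ * γ))) • p
        + (s / (s + ρ * γ)) • (p + s • e₁ + t • e₂ + (ρ * γ) • e₁) := by
      match_scalars <;> field_simp <;> ring
    rw [key]
    exact hL.smul_add_smul_add_smul_mem hp₂ hpL hq₁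
      (div_nonneg (by nlinarith) (by positivity)) (div_nonneg (by nlinarith) (by positivity))
      (by positivity) (by field_simp; ring)
  · have ht₀ : 0 < t := by nlinarith
    have key : p + s • e₁ + t • e₂ - (ρ * β) • e₂ =
        (ρ * β / t) • p
        + ((t * γ - ρ * β * γ - s * β) / (t * γ)) • (p + s • e₁ + t • e₂)
        + (s * β / (t * γ)) • (p + s • e₁ + t • e₂ + (ρ * γ) • e₁) := by
      match_scalars <;> field_simp <;> ring
    rw [key]
    exact hL.smul_add_smul_add_smul_mem hpL hqL hq₁ (by positivity)
      (div_nonneg (by nlinarith) (by positivity)) (by positivity) (by field_simp; ring)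

theorem Convex.false_of_crosses {L : Set V} (hL : Convex ℝ L) {p q e₁ e₂ : V}
    {α β γ δ ρ s t : ℝ} (hα : 0 < α) (hβ : 0 < β) (hγ : 0 < γ) (hδ : 0 < δ) (hρ : 1 ≤ ρ)
    (hq : q = p + s • e₁ + t • e₂) (hpL : p ∈ L) (hqL : q ∈ L)
    (hpα : p - α • e₁ ∉ L) (hpγ : p + γ • e₁ ∉ L) (hpβ : p - β • e₂ ∈ L) (hpδ : p + δ • e₂ ∈ L)
    (hqα : q - (ρ * α) • e₁ ∈ L) (hqγ : q + (ρ * γ) • e₁ ∈ L)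
    (hqβ : q - (ρ * β) • e₂ ∉ L) (hqδ : q + (ρ * δ) • e₂ ∉ L) : False := by
  wlog hs : 0 ≤ s generalizing e₁ s α γ
  · apply this (e₁ := -e₁) (s := -s) (α := γ) (γ := α) hγ hα (by rw [hq]; module) _ _ _ _
      (by linarith) <;> simpa only [smul_neg, sub_neg_eq_add, ← sub_eq_add_neg]
  wlog ht : 0 ≤ t generalizing e₂ t β δ
  · apply this (e₂ := -e₂) (t := -t) (β := δ) (δ := β) hδ hβ _ _ _ _ (by rw [hq]; module)
      (by linarith) <;> simpa only [smul_neg, sub_neg_eq_add, ← sub_eq_add_neg]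
  rcases hL.add_smul_mem_or_sub_smul_mem hβ hγ hρ hs ht hq hpL hqL hpβ hqγ with h | h
  exacts [hpγ h, hqβ h]

theorem disjoint_segment_of_eq_preimage (hV : finrank ℝ V = 2) {F₁ F₂ : Set V}
    (hF₂ : Convex ℝ F₂) {ρ : ℝ} (hρ : 1 ≤ ρ) {w : V} (hF : F₁ = (fun z ↦ ρ • z + w) ⁻¹' F₂)
    {A B C D : V} (hA : A ∈ F₁ \ F₂) (hC : C ∈ F₁ \ F₂) (hB : B ∈ F₂ \ F₁) (hD : D ∈ F₂ \ F₁) :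
    Disjoint (segment ℝ A C) (segment ℝ B D) := by
  have hF₁ : Convex ℝ F₁ := hF ▸ (hF₂.translate_preimage_left w).smul_preimage ρ
  have hmem (z : V) : z ∈ F₁ ↔ ρ • z + w ∈ F₂ := by rw [hF]; rfl
  rw [Set.disjoint_left]
  intro p hpAC hpBD
  have hp₁ : p ∈ F₁ := hF₁.segment_subset hA.1 hC.1 hpAC
  have hp₂ : p ∈ F₂ := hF₂.segment_subset hB.1 hD.1 hpBD
  obtain ⟨θ, ⟨hθ₀, hθ₁⟩, hA', hC'⟩ := exists_eq_sub_smul_of_mem_openSegment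
    (mem_openSegment_of_ne_left_right (by rintro rfl; exact hA.2 hp₂)
      (by rintro rfl; exact hC.2 hp₂) hpAC)
  obtain ⟨κ, ⟨hκ₀, hκ₁⟩, hB', hD'⟩ := exists_eq_sub_smul_of_mem_openSegment
    (mem_openSegment_of_ne_left_right (by rintro rfl; exact hB.2 hp₁)
      (by rintro rfl; exact hD.2 hp₁) hpBD)
  set e₁ := C - A
  set e₂ := D - B
  have he₁ : e₁ ≠ 0 := fun h ↦ hA.2 (by rwa [hA', h, smul_zero, sub_zero])
  by_cases hcol : ∃ μ : ℝ, μ • e₁ = e₂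
  · obtain ⟨μ, hμ⟩ := hcol
    let g : ℝ →ᵃ[ℝ] V := AffineMap.lineMap p (p + e₁)
    have hg (x : ℝ) : g x = p + x • e₁ := by simp [g, AffineMap.lineMap_apply_module', add_comm]
    have hgA : g (-θ) = A := by rw [hg, hA']; module
    have hgC : g (1 - θ) = C := by rw [hg, hC']
    have hgB : g (-(κ * μ)) = B := by rw [hg, hB', ← hμ]; module
    have hgD : g ((1 - κ) * μ) = D := by rw [hg, hD', ← hμ]; module
    have := AffineMap.disjoint_segment_of_mem_diff hF₁ hF₂
      (AffineMap.lineMap_injective ℝ (by simpa using he₁)) (hgA ▸ hA) (hgC ▸ hC.1)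
      (hgB ▸ hB) (hgD ▸ hD)
    rw [hgA, hgB, hgC, hgD] at this
    exact Set.disjoint_left.mp this hpAC hpBD
  have hli : LinearIndependent ℝ ![e₁, e₂] :=
    (LinearIndependent.pair_iff' he₁).mpr fun μ hμ ↦ hcol ⟨μ, hμ⟩
  obtain ⟨s, t, hst⟩ := hli.exists_smul_add_smul_eq hV (ρ • p + w - p)
  refine hF₂.false_of_crosses (q := ρ • p + w) hθ₀ hκ₀ (by linarith) (by linarith) hρ
    (by rw [add_assoc, hst, add_sub_cancel]) hp₂ ((hmem p).mp hp₁) (hA' ▸ hA.2) (hC' ▸ hC.2)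
    (hB' ▸ hB.1) (hD' ▸ hD.1) ?_ ?_ ?_ ?_
  · convert (hmem A).mp hA.1 using 1; rw [hA']; module
  · convert (hmem C).mp hC.1 using 1; rw [hC']; module
  · convert (not_congr (hmem B)).mp hB.2 using 2; rw [hB']; module
  · convert (not_congr (hmem D)).mp hD.2 using 2; rw [hD']; module

def IsPosHomothet (K F : Set V) : Prop :=
  ∃ lam : ℝ, 0 < lam ∧ ∃ x : V, F = lam • K + {x}

theorem mem_smul_set_add_singleton_iff {K : Set V} {l : ℝ} (hl : l ≠ 0) {x z : V} :
    z ∈ l • K + {x} ↔ l⁻¹ • (z - x) ∈ K := by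
  rw [Set.add_singleton, Set.image_add_right, Set.mem_preimage,
    Set.mem_smul_set_iff_inv_smul_mem₀ hl, sub_eq_add_neg]

theorem smul_add_singleton_eq_preimage {K : Set V} {l₁ l₂ : ℝ} (hl₁ : 0 < l₁) (hl₂ : 0 < l₂)
    (x₁ x₂ : V) :
    l₁ • K + {x₁} = (fun z ↦ (l₂ / l₁) • z + (x₂ - (l₂ / l₁) • x₁)) ⁻¹' (l₂ • K + {x₂}) := by
  ext z
  rw [Set.mem_preimage, mem_smul_set_add_singleton_iff hl₁.ne',
    mem_smul_set_add_singleton_iff hl₂.ne', add_sub_assoc, sub_sub_cancel_left,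
    ← sub_eq_add_neg, ← smul_sub, smul_smul, div_eq_mul_inv, inv_mul_cancel_left₀ hl₂.ne']

theorem IsPosHomothet.convex {K F : Set V} (hK : Convex ℝ K) (hF : IsPosHomothet K F) :
    Convex ℝ F := by
  obtain ⟨l, -, x, rfl⟩ := hF
  exact (hK.smul l).add (convex_singleton x)

theorem IsPosHomothet.disjoint_segment (hV : finrank ℝ V = 2) {K F₁ F₂ : Set V}
    (hK : Convex ℝ K) (hF₁ : IsPosHomothet K F₁) (hF₂ : IsPosHomothet K F₂) {A B C D : V}
    (hA : A ∈ F₁ \ F₂) (hC : C ∈ F₁ \ F₂) (hB : B ∈ F₂ \ F₁) (hD : D ∈ F₂ \ F₁) :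
    Disjoint (segment ℝ A C) (segment ℝ B D) := by
  have hF₁c := hF₁.convex hK
  have hF₂c := hF₂.convex hK
  obtain ⟨l₁, hl₁, x₁, rfl⟩ := hF₁
  obtain ⟨l₂, hl₂, x₂, rfl⟩ := hF₂
  rcases le_total l₁ l₂ with hl | hl
  · exact disjoint_segment_of_eq_preimage hV hF₂c ((one_le_div hl₁).mpr hl)
      (smul_add_singleton_eq_preimage hl₁ hl₂ x₁ x₂) hA hC hB hD
  · exact (disjoint_segment_of_eq_preimage hV hF₁c ((one_le_div hl₂).mpr hl)
      (smul_add_singleton_eq_preimage hl₂ hl₁ x₂ x₁) hB hD hA hC).symm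

end

open Finset in
theorem vcDim_homothets_plane_le_three_general
    (K : Set (EuclideanSpace ℝ (Fin 2)))
    (hKconv : Convex ℝ K)
    (𝓕 : Set (Set (EuclideanSpace ℝ (Fin 2))))
    (h𝓕 : ∀ A ∈ 𝓕, ∃ lam : ℝ, 0 < lam ∧ ∃ x : EuclideanSpace ℝ (Fin 2), A = lam • K + {x}) :
    ∀ X : Finset (EuclideanSpace ℝ (Fin 2)), X.card = 4 →
      ∃ X' ⊆ X, ∀ F ∈ 𝓕, (↑X : Set (EuclideanSpace ℝ (Fin 2))) ∩ F ≠ ↑X' := by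
  classical
  intro X hX
  by_cases hpos : ∃ q ∈ X, q ∈ convexHull ℝ (↑X \ {q})
  · obtain ⟨q, hqX, hq⟩ := hpos
    refine ⟨X.erase q, X.erase_subset q, fun F hF ↦ ?_⟩
    rw [coe_erase]
    exact (IsPosHomothet.convex hKconv (h𝓕 F hF)).inter_ne_diff_singleton hqX hq
  push Not at hpos
  obtain ⟨A, B, C, D, hACX, hBD, p, hpAC, hpBD⟩ :=
    exists_crossing_segments finrank_euclideanSpace_fin hX hpos
  by_contra! hcut
  obtain ⟨F₁, hF₁, h₁⟩ := hcut {A, C} hACX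
  obtain ⟨F₂, hF₂, h₂⟩ := hcut (X \ {A, C}) sdiff_subset
  obtain ⟨hACmem, hBDmem⟩ := Set.subset_diff_of_inter_eq h₁ (by rw [h₂, coe_sdiff])
  rw [← coe_sdiff, hBD] at hBDmem
  simp only [coe_pair, Set.insert_subset_iff, Set.singleton_subset_iff] at hACmem hBDmem
  exact Set.disjoint_left.mp (IsPosHomothet.disjoint_segment finrank_euclideanSpace_fin hKconv
    (h𝓕 F₁ hF₁) (h𝓕 F₂ hF₂) hACmem.1 hACmem.2 hBDmem.1 hBDmem.2) hpAC hpBD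

/-- A family of positive homothets of a convex body in the plane shatters no
set of four points; hence its VC-dimension is at most 3. -/
theorem vcDim_homothets_plane_le_three
    (K : Set (EuclideanSpace ℝ (Fin 2)))
    (hKc : IsCompact K) (hKconv : Convex ℝ K) (hKint : (interior K).Nonempty)
    (𝓕 : Set (Set (EuclideanSpace ℝ (Fin 2))))
    (h𝓕 : ∀ A ∈ 𝓕, ∃ lam : ℝ, 0 < lam ∧ ∃ x : EuclideanSpace ℝ (Fin 2), A = lam • K + {x}) :
    ∀ X : Finset (EuclideanSpace ℝ (Fin 2)), X.card = 4 →
      ∃ X' ⊆ X, ∀ F ∈ 𝓕, (↑X : Set (EuclideanSpace ℝ (Fin 2))) ∩ F ≠ ↑X' :=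
  vcDim_homothets_plane_le_three_general K hKconv 𝓕 h𝓕
end

section
/- There exist a convex body K ⊆ ℝ³ and a countable set V ⊆ ℝ³ such that the family 𝓕 = {K + v : v ∈ V} of translates of K has infinite VC-dimension; that is, for every M ∈ ℕ there exists a set X ⊆ ℝ³ with |X| = M such that for every subset X' ⊆ X there is v ∈ V with X ∩ (K + v) = X'. -/
open Pointwise

noncomputable section
namespace VC6

abbrev E := EuclideanSpace ℝ (Fin 3)
def mk3 (a b c : ℝ) : E := (WithLp.equiv 2 (Fin 3 → ℝ)).symm ![a, b, c]
@[simp] lemma mk3_0 (a b c : ℝ) : mk3 a b c 0 = a := rfl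
@[simp] lemma mk3_1 (a b c : ℝ) : mk3 a b c 1 = b := rfl
@[simp] lemma mk3_2 (a b c : ℝ) : mk3 a b c 2 = c := rfl

def tt (i : ℕ) : ℝ := 1 - (1/2 : ℝ)^(i+1)
def eps (i : ℕ) : ℝ := (1/100 : ℝ)^(i+1)
def uF (F : Finset ℕ) : ℝ := ∑ j ∈ F, 2 * (1/4 : ℝ)^(j+1)



lemma eps_pos (i : ℕ) : 0 < eps i := by simp only [eps]; positivity
lemma eps_le (i : ℕ) : eps i ≤ 1/100 := by
  have : (1/100:ℝ)^(i+1) ≤ (1/100:ℝ)^1 := by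
    apply pow_le_pow_of_le_one (by norm_num) (by norm_num) (by omega)
  simpa [eps] using this
lemma eps_lt_eps {j M : ℕ} (h : j < M) : eps M < eps j := by
  apply pow_lt_pow_right_of_lt_one₀ (by norm_num) (by norm_num) (by omega)

lemma tt_nonneg (i : ℕ) : 0 ≤ tt i := by
  have : (1/2:ℝ)^(i+1) ≤ (1/2:ℝ)^1 := by
    apply pow_le_pow_of_le_one (by norm_num) (by norm_num) (by omega)
  simp only [tt]; nlinarith
lemma tt_lt_one (i : ℕ) : tt i < 1 := by
  have : (0:ℝ) < (1/2)^(i+1) := by positivity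
  simp only [tt]; linarith

lemma tt_strictMono : StrictMono tt := by
  intro i j h
  simp only [tt]
  have : (1/2:ℝ)^(j+1) < (1/2:ℝ)^(i+1) :=
    pow_lt_pow_right_of_lt_one₀ (by norm_num) (by norm_num) (by omega)
  linarith
lemma tt_injective : Function.Injective tt := tt_strictMono.injective

lemma tail_eq (m N : ℕ) (h : m ≤ N) :
    ∑ j ∈ Finset.Ico m N, 2*(1/4:ℝ)^(j+1) = (2/3)*((1/4:ℝ)^m - (1/4:ℝ)^N) := by
  induction N, h using Nat.le_induction with
  | base => simp
  | succ N hN ih => rw [Finset.sum_Ico_succ_top hN, ih, pow_succ]; ring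

lemma uF_le_tail (F : Finset ℕ) (m : ℕ) (hF : ∀ j ∈ F, m ≤ j) :
    uF F ≤ (2/3) * (1/4:ℝ)^m := by
  classical
  obtain ⟨N, hN⟩ : ∃ N, (∀ j ∈ F, j < N) ∧ m ≤ N :=
    ⟨F.sup id + m + 1, fun j hj => by
      have := Finset.le_sup (f := id) hj; simp only [id] at this; omega, by omega⟩
  obtain ⟨hN, hmN⟩ := hN
  have hsub : F ⊆ Finset.Ico m N := fun j hj => Finset.mem_Ico.2 ⟨hF j hj, hN j hj⟩
  have h1 : uF F ≤ ∑ j ∈ Finset.Ico m N, 2 * (1/4:ℝ)^(j+1) := by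
    apply Finset.sum_le_sum_of_subset_of_nonneg hsub
    intro j _ _; positivity
  rw [tail_eq m N hmN] at h1
  have : (0:ℝ) ≤ (1/4:ℝ)^N := by positivity
  linarith

lemma uF_nonneg (F : Finset ℕ) : 0 ≤ uF F := by
  apply Finset.sum_nonneg; intro j _; positivity

lemma uF_le (F : Finset ℕ) : uF F ≤ 2/3 := by
  have := uF_le_tail F 0 (fun j _ => Nat.zero_le j)
  simpa using this




lemma aux_sep (A B : Finset ℕ) (m : ℕ) (hmA : m ∈ A) (hB : ∀ j ∈ B, m+1 ≤ j) :
    (4/3)*(1/4:ℝ)^(m+1) ≤ uF A - uF B := by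
  have h1 : 2*(1/4:ℝ)^(m+1) ≤ uF A :=
    Finset.single_le_sum (f := fun j => 2*(1/4:ℝ)^(j+1)) (fun j _ => by positivity) hmA
  have h2 : uF B ≤ (2/3)*(1/4:ℝ)^(m+1) := uF_le_tail B (m+1) hB
  linarith

lemma gap (S F : Finset ℕ) (i : ℕ) (hiS : i ∈ S) (hiF : i ∉ F) :
    (1/4:ℝ)^(i+1) ≤ |uF S - uF F| := by
  classical
  set T := (S \ F) ∪ (F \ S) with hT
  have hiT : i ∈ T := Finset.mem_union_left _ (Finset.mem_sdiff.2 ⟨hiS, hiF⟩)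
  have hne : T.Nonempty := ⟨i, hiT⟩
  set m := T.min' hne with hm
  have hmT : m ∈ T := Finset.min'_mem _ _
  have hmle : ∀ j ∈ T, m ≤ j := fun j hj => Finset.min'_le _ _ hj
  have hmi : m ≤ i := hmle i hiT
  have hsplit : uF S - uF F = uF (S \ F) - uF (F \ S) := by
    have h1 := Finset.sum_inter_add_sum_sdiff S F (fun j => 2 * (1/4:ℝ)^(j+1))
    have h2 := Finset.sum_inter_add_sum_sdiff F S (fun j => 2 * (1/4:ℝ)^(j+1))
    have h3 : S ∩ F = F ∩ S := Finset.inter_comm S F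
    simp only [uF]
    rw [← h1, ← h2, h3]
    ring
  have hmono : (1/4:ℝ)^(i+1) ≤ (1/4:ℝ)^(m+1) :=
    pow_le_pow_of_le_one (by norm_num) (by norm_num) (by omega)
  rcases Finset.mem_union.1 hmT with hmS | hmF
  · have hB : ∀ j ∈ F \ S, m + 1 ≤ j := by
      intro j hj
      have := hmle j (Finset.mem_union_right _ hj)
      rcases Nat.eq_or_lt_of_le this with h | h
      · exfalso
        rw [← h] at hj
        exact (Finset.mem_sdiff.1 hj).2 (Finset.mem_sdiff.1 hmS).1
      · omega
    have := aux_sep (S \ F) (F \ S) m hmS hB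
    have habs : uF S - uF F ≤ |uF S - uF F| := le_abs_self _
    have hp : (0:ℝ) < (1/4:ℝ)^(m+1) := by positivity
    linarith
  · have hB : ∀ j ∈ S \ F, m + 1 ≤ j := by
      intro j hj
      have := hmle j (Finset.mem_union_left _ hj)
      rcases Nat.eq_or_lt_of_le this with h | h
      · exfalso
        rw [← h] at hj
        exact (Finset.mem_sdiff.1 hj).2 (Finset.mem_sdiff.1 hmF).1
      · omega
    have := aux_sep (F \ S) (S \ F) m hmF hB
    have habs : -(uF S - uF F) ≤ |uF S - uF F| := neg_le_abs _
    have hp : (0:ℝ) < (1/4:ℝ)^(m+1) := by positivity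
    linarith

lemma gap_sq (S F : Finset ℕ) (i : ℕ) (hiS : i ∈ S) (hiF : i ∉ F) :
    eps i ≤ (uF S - uF F)^2 := by
  have h := gap S F i hiS hiF
  have h1 : ((1/4:ℝ)^(i+1))^2 ≤ |uF S - uF F|^2 := by
    apply pow_le_pow_left₀ (by positivity) h
  rw [sq_abs] at h1
  have h2 : eps i ≤ ((1/4:ℝ)^(i+1))^2 := by
    rw [← pow_mul, eps]
    calc (1/100:ℝ)^(i+1) ≤ (1/16:ℝ)^(i+1) := by
          apply pow_le_pow_left₀ (by norm_num) (by norm_num)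
      _ = ((1/4:ℝ))^((i+1)*2) := by
          rw [show (1/16:ℝ) = (1/4)^2 by norm_num, ← pow_mul, mul_comm]
  linarith

lemma tt_gap {i j : ℕ} (h : i ≠ j) : eps j ≤ (tt i - tt j)^2 := by
  have hd : tt i - tt j = (1/2:ℝ)^(j+1) - (1/2:ℝ)^(i+1) := by simp only [tt]; ring
  rcases Nat.lt_or_ge j i with hlt | hge
  · -- j < i : diff ≥ (1/2)^(j+2)
    have h1 : (1/2:ℝ)^(i+1) ≤ (1/2:ℝ)^(j+2) :=
      pow_le_pow_of_le_one (by norm_num) (by norm_num) (by omega)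
    have h2 : (1/2:ℝ)^(j+2) ≤ tt i - tt j := by
      rw [hd]
      have : (1/2:ℝ)^(j+1) = 2 * (1/2:ℝ)^(j+2) := by rw [pow_succ]; ring
      linarith
    have h3 : ((1/2:ℝ)^(j+2))^2 ≤ (tt i - tt j)^2 := by
      apply pow_le_pow_left₀ (by positivity) h2
    have h4 : eps j ≤ ((1/2:ℝ)^(j+2))^2 := by
      rw [← pow_mul, eps]
      have hnat : (4:ℝ)^(j+2) ≤ (100:ℝ)^(j+1) := by
        have : (4:ℝ)^j ≤ (100:ℝ)^j := pow_le_pow_left₀ (by norm_num) (by norm_num) j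
        rw [pow_add, pow_add]
        nlinarith [pow_nonneg (by norm_num : (0:ℝ) ≤ 4) j]
      have e1 : ((1/2:ℝ))^((j+2)*2) = ((4:ℝ)^(j+2))⁻¹ := by
        rw [← inv_pow]
        rw [show ((j+2)*2) = 2*(j+2) by ring, pow_mul]
        norm_num
      have e2 : ((1/100:ℝ))^(j+1) = ((100:ℝ)^(j+1))⁻¹ := by
        rw [← inv_pow]; norm_num
      rw [e1, e2]
      apply inv_anti₀ (by positivity) hnat
    linarith
  · -- i < j (i ≠ j): |diff| = (1/2)^{i+1} - (1/2)^{j+1} ≥ (1/2)^{i+2}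
    have hij : i < j := by omega
    have h1 : (1/2:ℝ)^(j+1) ≤ (1/2:ℝ)^(i+2) :=
      pow_le_pow_of_le_one (by norm_num) (by norm_num) (by omega)
    have h2 : (1/2:ℝ)^(i+2) ≤ tt j - tt i := by
      have : tt j - tt i = (1/2:ℝ)^(i+1) - (1/2:ℝ)^(j+1) := by simp only [tt]; ring
      rw [this]
      have h5 : (1/2:ℝ)^(i+1) = 2 * (1/2:ℝ)^(i+2) := by rw [pow_succ]; ring
      linarith
    have h3 : ((1/2:ℝ)^(i+2))^2 ≤ (tt j - tt i)^2 := by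
      apply pow_le_pow_left₀ (by positivity) h2
    have h4 : eps j ≤ ((1/2:ℝ)^(i+2))^2 := by
      rw [← pow_mul, eps]
      calc (1/100:ℝ)^(j+1) ≤ (1/100:ℝ)^(i+2) :=
            pow_le_pow_of_le_one (by norm_num) (by norm_num) (by omega)
        _ ≤ (1/4:ℝ)^(i+2) := pow_le_pow_left₀ (by norm_num) (by norm_num) _
        _ = (1/2:ℝ)^((i+2)*2) := by
            rw [show (1/4:ℝ) = (1/2)^2 by norm_num, ← pow_mul, mul_comm]
    have h6 : (tt j - tt i)^2 = (tt i - tt j)^2 := by ring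
    linarith


def K : Set E :=
  {p | |p 0| ≤ 5 ∧ |p 1| ≤ 5 ∧ -20 ≤ p 2 ∧ p 2 ≤ -(p 0)^2 - (p 1)^2 ∧
    ∀ i : ℕ, ∀ F : Finset ℕ, i ∉ F →
      p 2 ≤ -2*uF F*(p 0) - 2*tt i*(p 1) + (uF F)^2 + (tt i)^2 - eps i}

lemma contc (j : Fin 3) : Continuous (fun p : E => p j) :=
  (continuous_apply j).comp (PiLp.continuousLinearEquiv 2 ℝ (fun _ : Fin 3 => ℝ)).continuous

lemma K_closed : IsClosed K := by
  have : K = {p : E | |p 0| ≤ 5} ∩ {p : E | |p 1| ≤ 5} ∩ {p : E | -20 ≤ p 2} ∩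
      {p : E | p 2 ≤ -(p 0)^2 - (p 1)^2} ∩
      ⋂ (i : ℕ), ⋂ (F : Finset ℕ), ⋂ (_ : i ∉ F),
        {p : E | p 2 ≤ -2*uF F*(p 0) - 2*tt i*(p 1) + (uF F)^2 + (tt i)^2 - eps i} := by
    ext p
    simp only [K, Set.mem_setOf_eq, Set.mem_inter_iff, Set.mem_iInter]
    tauto
  rw [this]
  refine (((((isClosed_le ?_ ?_).inter (isClosed_le ?_ ?_)).inter (isClosed_le ?_ ?_)).inter
    (isClosed_le ?_ ?_)).inter (isClosed_iInter fun i => isClosed_iInter fun F =>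
      isClosed_iInter fun _ => isClosed_le ?_ ?_))
  · exact (contc 0).abs
  · exact continuous_const
  · exact (contc 1).abs
  · exact continuous_const
  · exact continuous_const
  · exact contc 2
  · exact contc 2
  · exact (((contc 0).pow 2).neg).sub ((contc 1).pow 2)
  · exact contc 2
  · exact (((((continuous_const.mul (contc 0)).sub (continuous_const.mul (contc 1))).add
      continuous_const).add continuous_const).sub continuous_const)

lemma K_subset_ball : K ⊆ Metric.closedBall (0 : E) 22 := by
  intro p hp
  obtain ⟨h0, h1, h2, h3, _⟩ := hp
  rw [Metric.mem_closedBall, dist_zero_right, EuclideanSpace.norm_eq]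
  have e : ∑ i, ‖p i‖^2 = (p 0)^2 + (p 1)^2 + (p 2)^2 := by
    rw [Fin.sum_univ_three]
    simp [Real.norm_eq_abs, sq_abs]
  rw [e]
  have b0 := abs_le.1 h0
  have b1 := abs_le.1 h1
  have hp2 : p 2 ≤ 0 := by nlinarith [sq_nonneg (p 0), sq_nonneg (p 1)]
  have : (p 0)^2 + (p 1)^2 + (p 2)^2 ≤ 484 := by nlinarith
  calc Real.sqrt ((p 0)^2 + (p 1)^2 + (p 2)^2) ≤ Real.sqrt 484 := Real.sqrt_le_sqrt this
    _ = 22 := by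
        rw [show (484:ℝ) = 22^2 by norm_num, Real.sqrt_sq (by norm_num)]

lemma K_compact : IsCompact K :=
  IsCompact.of_isClosed_subset (isCompact_closedBall (0 : E) 22) K_closed K_subset_ball

lemma K_convex : Convex ℝ K := by
  intro p hp q hq a b ha hb hab
  obtain ⟨hp0, hp1, hp2, hp3, hp4⟩ := hp
  obtain ⟨hq0, hq1, hq2, hq3, hq4⟩ := hq
  have e0 : (a • p + b • q) 0 = a * p 0 + b * q 0 := by
    simp [PiLp.add_apply, PiLp.smul_apply, smul_eq_mul]
  have e1 : (a • p + b • q) 1 = a * p 1 + b * q 1 := by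
    simp [PiLp.add_apply, PiLp.smul_apply, smul_eq_mul]
  have e2 : (a • p + b • q) 2 = a * p 2 + b * q 2 := by
    simp [PiLp.add_apply, PiLp.smul_apply, smul_eq_mul]
  have bp0 := abs_le.1 hp0; have bq0 := abs_le.1 hq0
  have bp1 := abs_le.1 hp1; have bq1 := abs_le.1 hq1
  simp only [K, Set.mem_setOf_eq]
  refine ⟨?_, ?_, ?_, ?_, ?_⟩
  · rw [e0, abs_le]
    constructor
    · linarith [mul_le_mul_of_nonneg_left bp0.1 ha, mul_le_mul_of_nonneg_left bq0.1 hb]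
    · linarith [mul_le_mul_of_nonneg_left bp0.2 ha, mul_le_mul_of_nonneg_left bq0.2 hb]
  · rw [e1, abs_le]
    constructor
    · linarith [mul_le_mul_of_nonneg_left bp1.1 ha, mul_le_mul_of_nonneg_left bq1.1 hb]
    · linarith [mul_le_mul_of_nonneg_left bp1.2 ha, mul_le_mul_of_nonneg_left bq1.2 hb]
  · rw [e2]
    linarith [mul_le_mul_of_nonneg_left hp2 ha, mul_le_mul_of_nonneg_left hq2 hb]
  · rw [e0, e1, e2]
    have m1 : a * p 2 ≤ a * (-(p 0)^2 - (p 1)^2) := mul_le_mul_of_nonneg_left hp3 ha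
    have m2 : b * q 2 ≤ b * (-(q 0)^2 - (q 1)^2) := mul_le_mul_of_nonneg_left hq3 hb
    have id0 : a*(p 0)^2 + b*(q 0)^2 - (a*p 0 + b*q 0)^2 = a*b*(p 0 - q 0)^2 := by
      have hba : b = 1 - a := by linarith
      rw [hba]; ring
    have id1 : a*(p 1)^2 + b*(q 1)^2 - (a*p 1 + b*q 1)^2 = a*b*(p 1 - q 1)^2 := by
      have hba : b = 1 - a := by linarith
      rw [hba]; ring
    have n0 : 0 ≤ a*b*(p 0 - q 0)^2 := mul_nonneg (mul_nonneg ha hb) (sq_nonneg _)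
    have n1 : 0 ≤ a*b*(p 1 - q 1)^2 := mul_nonneg (mul_nonneg ha hb) (sq_nonneg _)
    linarith [m1, m2]
  · intro i F hiF
    rw [e0, e1, e2]
    have m1 : a * p 2 ≤ a * (-2*uF F*(p 0) - 2*tt i*(p 1) + (uF F)^2 + (tt i)^2 - eps i) :=
      mul_le_mul_of_nonneg_left (hp4 i F hiF) ha
    have m2 : b * q 2 ≤ b * (-2*uF F*(q 0) - 2*tt i*(q 1) + (uF F)^2 + (tt i)^2 - eps i) :=
      mul_le_mul_of_nonneg_left (hq4 i F hiF) hb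
    have hcomb : a*((uF F)^2 + (tt i)^2 - eps i) + b*((uF F)^2 + (tt i)^2 - eps i)
        = (uF F)^2 + (tt i)^2 - eps i := by
      rw [← add_mul, hab, one_mul]
    linarith [m1, m2]


lemma ball_subset_K : Metric.ball (mk3 0 0 (-19)) (1/2) ⊆ K := by
  intro q hq
  rw [Metric.mem_ball] at hq
  have hcoord : ∀ j : Fin 3, |q j - mk3 0 0 (-19) j| ≤ dist q (mk3 0 0 (-19)) := by
    intro j
    rw [EuclideanSpace.dist_eq]
    rw [← Real.sqrt_sq_eq_abs]
    apply Real.sqrt_le_sqrt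
    have := Finset.single_le_sum (f := fun i => dist (q i) (mk3 0 0 (-19) i) ^ 2)
      (fun i _ => sq_nonneg _) (Finset.mem_univ j)
    simpa [Real.dist_eq, sq_abs] using this
  have h0 := (hcoord 0).trans_lt hq
  have h1 := (hcoord 1).trans_lt hq
  have h2 := (hcoord 2).trans_lt hq
  simp only [mk3_0, mk3_1, mk3_2, sub_zero, sub_neg_eq_add] at h0 h1 h2
  have b0 := abs_lt.1 h0
  have b1 := abs_lt.1 h1
  have b2 := abs_lt.1 h2
  simp only [K, Set.mem_setOf_eq]
  refine ⟨by rw [abs_le]; constructor <;> linarith,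
          by rw [abs_le]; constructor <;> linarith,
          by linarith, by nlinarith, ?_⟩
  intro i F hiF
  have hu1 := uF_nonneg F
  have hu2 := uF_le F
  have ht1 := tt_nonneg i
  have ht2 := tt_lt_one i
  have he := eps_le i
  have hA : uF F * q 0 ≥ -(2/3) * (1/2) := by nlinarith
  have hB : tt i * q 1 ≥ -(1) * (1/2) := by nlinarith
  nlinarith [sq_nonneg (uF F), sq_nonneg (tt i)]

lemma K_interior : (interior K).Nonempty := by
  have h := interior_maximal ball_subset_K Metric.isOpen_ball
  exact ⟨mk3 0 0 (-19), h (Metric.mem_ball_self (by norm_num))⟩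

lemma mem_add_singleton (A : Set E) (v x : E) : x ∈ A + {v} ↔ x - v ∈ A := by
  rw [Set.add_singleton]
  constructor
  · rintro ⟨a, ha, rfl⟩
    simpa using ha
  · intro h
    exact ⟨x - v, h, by simp⟩

def xpt (i : ℕ) : E := mk3 0 (tt i) (-(tt i)^2)
def vv (M : ℕ) (S : Finset ℕ) : E := mk3 (-(uF S)) 0 ((uF S)^2 + eps M)

lemma sub_coords (M : ℕ) (S : Finset ℕ) (i : ℕ) :
    (xpt i - vv M S) 0 = uF S ∧ (xpt i - vv M S) 1 = tt i ∧
    (xpt i - vv M S) 2 = -(tt i)^2 - (uF S)^2 - eps M := by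
  refine ⟨?_, ?_, ?_⟩ <;> · simp [xpt, vv, PiLp.sub_apply]; try ring

lemma in_mem {M : ℕ} {S : Finset ℕ} {i : ℕ} (hiS : i ∈ S) :
    xpt i ∈ K + {vv M S} := by
  rw [mem_add_singleton]
  obtain ⟨c0, c1, c2⟩ := sub_coords M S i
  rw [K, Set.mem_setOf_eq, c0, c1, c2]
  have hu1 := uF_nonneg S
  have hu2 := uF_le S
  have ht1 := tt_nonneg i
  have ht2 := tt_lt_one i
  have he1 := eps_pos M
  have he2 := eps_le M
  refine ⟨by rw [abs_le]; constructor <;> linarith,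
          by rw [abs_le]; constructor <;> linarith,
          by nlinarith, by linarith, ?_⟩
  intro j F hjF
  by_cases hji : j = i
  · subst hji
    have hg := gap_sq S F j hiS hjF
    nlinarith [sq_nonneg (tt j - tt j)]
  · have hg := tt_gap (show i ≠ j from fun h => hji h.symm)
    nlinarith [sq_nonneg (uF S - uF F)]

lemma out_not_mem {M : ℕ} {S : Finset ℕ} {j : ℕ} (hjM : j < M) (hjS : j ∉ S) :
    xpt j ∉ K + {vv M S} := by
  rw [mem_add_singleton]
  intro h
  obtain ⟨c0, c1, c2⟩ := sub_coords M S j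
  obtain ⟨-, -, -, -, h5⟩ := h
  have := h5 j S hjS
  rw [c0, c1, c2] at this
  have := eps_lt_eps hjM
  nlinarith

lemma xpt_injective : Function.Injective xpt := by
  intro i j h
  have : xpt i 1 = xpt j 1 := by rw [h]
  simp only [xpt, mk3_1] at this
  exact tt_injective this

def V : Set E := Set.range (fun q : ℕ × Finset ℕ => vv q.1 q.2)

lemma V_countable : V.Countable := Set.countable_range _

theorem main :
    ∃ K : Set (EuclideanSpace ℝ (Fin 3)),
      IsCompact K ∧ Convex ℝ K ∧ (interior K).Nonempty ∧
      ∃ V : Set (EuclideanSpace ℝ (Fin 3)), V.Countable ∧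
        ∀ M : ℕ, ∃ X : Finset (EuclideanSpace ℝ (Fin 3)), X.card = M ∧
          ∀ X' ⊆ X, ∃ v ∈ V,
            (↑X : Set (EuclideanSpace ℝ (Fin 3))) ∩ (K + {v}) = ↑X' := by
  classical
  refine ⟨K, K_compact, K_convex, K_interior, V, V_countable, ?_⟩
  intro M
  refine ⟨(Finset.range M).image xpt, ?_, ?_⟩
  · rw [Finset.card_image_of_injective _ xpt_injective, Finset.card_range]
  · intro X' hX'
    set S := (Finset.range M).filter (fun i => xpt i ∈ X') with hS
    refine ⟨vv M S, Set.mem_range.2 ⟨(M, S), rfl⟩, ?_⟩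
    ext x
    simp only [Set.mem_inter_iff, Finset.mem_coe]
    constructor
    · rintro ⟨hxX, hxK⟩
      obtain ⟨i, hi, rfl⟩ := Finset.mem_image.1 (Finset.mem_coe.1 hxX)
      by_cases hiS : i ∈ S
      · exact (Finset.mem_filter.1 hiS).2
      · exact absurd hxK (out_not_mem (Finset.mem_range.1 hi)
          (fun h => hiS h))
    · intro hxX'
      have hxX : x ∈ (Finset.range M).image xpt := hX' hxX'
      obtain ⟨i, hi, rfl⟩ := Finset.mem_image.1 hxX
      have hiS : i ∈ S := Finset.mem_filter.2 ⟨hi, hxX'⟩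
      exact ⟨Finset.mem_coe.1 hxX, in_mem hiS⟩

end VC6

end

/-- There exist a convex body `K ⊆ ℝ³` and a countable set `V ⊆ ℝ³` such that
the family of translates `{K + v : v ∈ V}` has infinite VC-dimension: it shatters a set of
`M` points for every `M`. -/
theorem exists_translates_infinite_vcdim :
    ∃ K : Set (EuclideanSpace ℝ (Fin 3)),
      IsCompact K ∧ Convex ℝ K ∧ (interior K).Nonempty ∧
      ∃ V : Set (EuclideanSpace ℝ (Fin 3)), V.Countable ∧
        ∀ M : ℕ, ∃ X : Finset (EuclideanSpace ℝ (Fin 3)), X.card = M ∧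
          ∀ X' ⊆ X, ∃ v ∈ V,
            (↑X : Set (EuclideanSpace ℝ (Fin 3))) ∩ (K + {v}) = ↑X' := by
  exact VC6.main
end

section
/- There exist a convex body K ⊆ ℝ³ and a countable set V ⊆ ℝ³ such that the family 𝓕 = {K + v : v ∈ V} of translates of K has infinite dual VC-dimension; that is, for every k ∈ ℕ there exist distinct v₁, …, v_k ∈ V such that for every subset S ⊆ {1, …, k} there is a point x ∈ ℝ³ with x ∈ K + vᵢ if and only if i ∈ S. -/
/-!
Points of the paraboloid `z = x² + y²` are exposed: the tangent functional at
`(a, b, a² + b²)` exceeds its value there by `(c - a)² + (d - b)²` at `(c, d, c² + d²)`.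
The parameters `(2⁻ⁱ, 2⁻ⁿ)` form a grid that is uniformly discrete around each of its points,
so for every set `A` of grid indices the closed convex hull of the lifted points of `A` and of a
ball above the paraboloid contains the lifted grid point of `(i, n)` exactly when `(i, n) ∈ A`.
Give every pair `(k, S)` its own row `n` of the grid and put the column `i` into `A` iff `i ∈ S`.
Translating the body by `-(2⁻ⁱ, 0, 2⁻²ⁱ)` moves the grid point `(i, n)` to `(0, 2⁻ⁿ, 2⁻²ⁿ)`,
which is therefore the witness for `S`.
-/

open Pointwise Metric Set

theorem closedConvexHull_subset_setOf_le {E : Type*} [AddCommGroup E] [Module ℝ E]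
    [TopologicalSpace E] (ℓ : E →L[ℝ] ℝ) {c : ℝ} {s : Set E} (h : ∀ p ∈ s, c ≤ ℓ p) :
    closedConvexHull ℝ s ⊆ {p | c ≤ ℓ p} :=
  closedConvexHull_min h (convex_halfSpace_ge ℓ.isLinear c)
    (isClosed_le continuous_const ℓ.continuous)

theorem abs_inv_two_pow_le_one (n : ℕ) : |(2 : ℝ)⁻¹ ^ n| ≤ 1 := by
  rw [abs_of_nonneg (by positivity)]
  exact pow_le_one₀ (by norm_num) (by norm_num)

theorem sq_inv_two_pow_succ_le_sq_sub {m n : ℕ} (h : m ≠ n) :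
    ((2 : ℝ)⁻¹ ^ (n + 1)) ^ 2 ≤ (2⁻¹ ^ m - 2⁻¹ ^ n) ^ 2 := by
  have h0 : (0 : ℝ) ≤ 2⁻¹ := by norm_num
  have h1 : (2 : ℝ)⁻¹ ≤ 1 := by norm_num
  have hpos : (0 : ℝ) < 2⁻¹ ^ n := by positivity
  rw [← sq_abs (_ - _)]
  gcongr
  rcases h.lt_or_gt with hmn | hnm
  · have := pow_le_pow_of_le_one h0 h1 hmn
    rw [pow_succ] at this ⊢
    rw [abs_of_nonneg (by nlinarith)]
    nlinarith
  · have := pow_le_pow_of_le_one h0 h1 hnm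
    rw [pow_succ] at this ⊢
    rw [abs_of_nonpos (by nlinarith)]
    nlinarith

noncomputable section

namespace DualVC

abbrev E3 := EuclideanSpace ℝ (Fin 3)

def paraboloidPoint (a b : ℝ) : E3 := !₂[a, b, a ^ 2 + b ^ 2]

theorem paraboloidPoint_add (a b : ℝ) :
    paraboloidPoint a 0 + paraboloidPoint 0 b = paraboloidPoint a b := by
  ext j
  fin_cases j <;> simp [paraboloidPoint]

theorem paraboloidPoint_left_injective (b : ℝ) :
    Function.Injective (paraboloidPoint · b) := fun a a' h => by
  simpa [paraboloidPoint] using congrArg (· 0) h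

def paraboloidTangent (a b : ℝ) : StrongDual ℝ E3 :=
  EuclideanSpace.proj 2 - (2 * a) • EuclideanSpace.proj 0 - (2 * b) • EuclideanSpace.proj 1

theorem paraboloidTangent_apply (a b : ℝ) (p : E3) :
    paraboloidTangent a b p = p 2 - 2 * a * p 0 - 2 * b * p 1 := by
  simp [paraboloidTangent, mul_assoc]

theorem paraboloidTangent_paraboloidPoint (a b c d : ℝ) :
    paraboloidTangent a b (paraboloidPoint c d) =
      paraboloidTangent a b (paraboloidPoint a b) + ((c - a) ^ 2 + (d - b) ^ 2) := by
  simp only [paraboloidPoint, paraboloidTangent_apply, Matrix.cons_val, Matrix.cons_val_zero,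
    Matrix.cons_val_one]
  ring

theorem paraboloidTangent_add_one_le {a b : ℝ} (ha : |a| ≤ 1) (hb : |b| ≤ 1) {p : E3}
    (hp : p ∈ closedBall (EuclideanSpace.single 2 6) 1) :
    paraboloidTangent a b (paraboloidPoint a b) + 1 ≤ paraboloidTangent a b p := by
  have hcoord (j : Fin 3) : |p j - EuclideanSpace.single 2 (6 : ℝ) j| ≤ 1 :=
    (PiLp.dist_apply_le p _ j).trans hp
  have hp0 : |a * p 0| ≤ 1 := by
    rw [abs_mul]; exact mul_le_one₀ ha (abs_nonneg _) (by simpa using hcoord 0)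
  have hp1 : |b * p 1| ≤ 1 := by
    rw [abs_mul]; exact mul_le_one₀ hb (abs_nonneg _) (by simpa using hcoord 1)
  have hp2 : 5 ≤ p 2 := by linarith [(abs_le.mp (by simpa using hcoord 2)).1]
  rw [paraboloidTangent_apply, paraboloidTangent_apply]
  simp only [paraboloidPoint, PiLp.toLp_apply, Matrix.cons_val]
  nlinarith [abs_le.mp hp0, abs_le.mp hp1]

theorem norm_paraboloidPoint_le {a b : ℝ} (ha : |a| ≤ 1) (hb : |b| ≤ 1) :
    ‖paraboloidPoint a b‖ ≤ 3 := by
  have ha2 : a ^ 2 ≤ 1 := by nlinarith [sq_abs a, abs_nonneg a]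
  have hb2 : b ^ 2 ≤ 1 := by nlinarith [sq_abs b, abs_nonneg b]
  rw [EuclideanSpace.norm_eq, Real.sqrt_le_iff, Fin.sum_univ_three]
  simp only [paraboloidPoint, PiLp.toLp_apply, Matrix.cons_val, Real.norm_eq_abs, sq_abs]
  constructor <;> nlinarith

def gridPoint (q : ℕ × ℕ) : E3 := paraboloidPoint (2⁻¹ ^ q.1) (2⁻¹ ^ q.2)

def body (A : Set (ℕ × ℕ)) : Set E3 :=
  closedConvexHull ℝ (gridPoint '' A ∪ closedBall (EuclideanSpace.single 2 6) 1)

theorem gridPoint_notMem_body {A : Set (ℕ × ℕ)} {q : ℕ × ℕ} (hq : q ∉ A) :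
    gridPoint q ∉ body A := by
  set δ : ℝ := min ((2⁻¹ ^ (q.1 + 1)) ^ 2) ((2⁻¹ ^ (q.2 + 1)) ^ 2)
  have hδ : 0 < δ := by positivity
  have hδ_le_one : δ ≤ 1 :=
    (min_le_left _ _).trans (pow_le_one₀ (by positivity) (pow_le_one₀ (by norm_num) (by norm_num)))
  have hgen : ∀ p ∈ gridPoint '' A ∪ closedBall (EuclideanSpace.single 2 6) 1,
      paraboloidTangent (2⁻¹ ^ q.1) (2⁻¹ ^ q.2) (gridPoint q) + δ ≤
        paraboloidTangent (2⁻¹ ^ q.1) (2⁻¹ ^ q.2) p := by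
    unfold gridPoint
    rintro _ (⟨p, hp, rfl⟩ | hp)
    · have hpq : p.1 ≠ q.1 ∨ p.2 ≠ q.2 := by
        by_contra! h
        exact hq (Prod.ext h.1 h.2 ▸ hp)
      have hsep : δ ≤ (2⁻¹ ^ p.1 - 2⁻¹ ^ q.1) ^ 2 + (2⁻¹ ^ p.2 - 2⁻¹ ^ q.2) ^ 2 := by
        rcases hpq with h | h
        · exact ((min_le_left _ _).trans (sq_inv_two_pow_succ_le_sq_sub h)).trans
            (le_add_of_nonneg_right (sq_nonneg _))
        · exact ((min_le_right _ _).trans (sq_inv_two_pow_succ_le_sq_sub h)).trans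
            (le_add_of_nonneg_left (sq_nonneg _))
      rw [paraboloidTangent_paraboloidPoint _ _ (2⁻¹ ^ p.1)]
      linarith
    · linarith [paraboloidTangent_add_one_le (abs_inv_two_pow_le_one q.1)
        (abs_inv_two_pow_le_one q.2) hp]
  intro hmem
  have := closedConvexHull_subset_setOf_le _ hgen hmem
  simp only [Set.mem_ofPred_eq] at this
  linarith

theorem gridPoint_mem_body_iff {A : Set (ℕ × ℕ)} {q : ℕ × ℕ} : gridPoint q ∈ body A ↔ q ∈ A :=
  ⟨not_imp_not.mp gridPoint_notMem_body,
    fun hq => subset_closedConvexHull (Or.inl (mem_image_of_mem gridPoint hq))⟩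

theorem body_subset_closedBall (A : Set (ℕ × ℕ)) : body A ⊆ closedBall 0 7 := by
  refine closedConvexHull_min ?_ (convex_closedBall _ _) isClosed_closedBall
  rintro _ (⟨q, -, rfl⟩ | hp)
  · rw [mem_closedBall_zero_iff]
    exact (norm_paraboloidPoint_le (abs_inv_two_pow_le_one q.1)
      (abs_inv_two_pow_le_one q.2)).trans (by norm_num)
  · refine closedBall_subset_closedBall' ?_ hp
    rw [dist_zero_right, PiLp.norm_single]
    norm_num

theorem isCompact_body (A : Set (ℕ × ℕ)) : IsCompact (body A) :=
  (isCompact_closedBall 0 7).of_isClosed_subset isClosed_closedConvexHull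
    (body_subset_closedBall A)

theorem convex_body (A : Set (ℕ × ℕ)) : Convex ℝ (body A) := convex_closedConvexHull

theorem interior_body_nonempty (A : Set (ℕ × ℕ)) : (interior (body A)).Nonempty :=
  ⟨_, interior_mono (subset_union_right.trans subset_closedConvexHull)
    (ball_subset_interior_closedBall (mem_ball_self one_pos))⟩

def gadgets : Set (ℕ × ℕ) :=
  {q | ∃ (k : ℕ) (S : Finset (Fin k)),
    q.2 = Encodable.encode (⟨k, S⟩ : Σ k, Finset (Fin k)) ∧ ∃ i ∈ S, (i : ℕ) = q.1}

theorem mk_mem_gadgets_iff {k : ℕ} (S : Finset (Fin k)) (i : Fin k) :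
    ((i : ℕ), Encodable.encode (⟨k, S⟩ : Σ k, Finset (Fin k))) ∈ gadgets ↔ i ∈ S := by
  constructor
  · rintro ⟨k', S', hkS, j, hj, hji⟩
    cases Encodable.encode_injective hkS
    rwa [Fin.ext hji] at hj
  · exact fun hi => ⟨k, S, rfl, i, hi, rfl⟩

end DualVC

end

open DualVC

/-- There exist a convex body `K ⊆ ℝ³` and a countable set `V ⊆ ℝ³` such that
the family of translates `{K + v : v ∈ V}` has infinite dual VC-dimension: for every `k`
there are distinct translation vectors `v 1, …, v k` in `V` such that for every subset `S`
of the indices there is a point lying exactly in the translates with index in `S`. -/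
theorem exists_translates_infinite_dual_vcdim :
    ∃ K : Set (EuclideanSpace ℝ (Fin 3)),
      IsCompact K ∧ Convex ℝ K ∧ (interior K).Nonempty ∧
      ∃ V : Set (EuclideanSpace ℝ (Fin 3)), V.Countable ∧
        ∀ k : ℕ, ∃ v : Fin k → EuclideanSpace ℝ (Fin 3),
          Function.Injective v ∧ (∀ i, v i ∈ V) ∧
          ∀ S : Finset (Fin k), ∃ x : EuclideanSpace ℝ (Fin 3),
            ∀ i : Fin k, x ∈ K + {v i} ↔ i ∈ S := by
  refine ⟨body gadgets, isCompact_body _, convex_body _, interior_body_nonempty _,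
    range fun n : ℕ => -paraboloidPoint (2⁻¹ ^ n) 0, countable_range _, fun k =>
    ⟨fun i => -paraboloidPoint (2⁻¹ ^ (i : ℕ)) 0, ?_, fun i => mem_range_self _, fun S =>
      ⟨paraboloidPoint 0 (2⁻¹ ^ Encodable.encode (⟨k, S⟩ : Σ k, Finset (Fin k))), fun i => ?_⟩⟩⟩
  · exact neg_injective.comp ((paraboloidPoint_left_injective 0).comp
      ((pow_right_injective₀ (by norm_num) (by norm_num)).comp Fin.val_injective))
  · rw [add_singleton, image_add_right, mem_preimage, neg_neg, add_comm, paraboloidPoint_add,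
      ← mk_mem_gadgets_iff]
    exact gridPoint_mem_body_iff (q := ((i : ℕ), _))
end

section
/- Let K be a convex body in ℝⁿ. Then vol(2K − K) ≤ 2ⁿ · C(2n, n) · vol(K), where 2K − K = {2a − b : a, b ∈ K}, C(2n, n) is the binomial coefficient, and vol denotes Lebesgue measure. -/
/-!
The covariogram `g(x) = μ(K ∩ (x + K))` of `K` integrates to `μ(K)²`. If `x = t • (a - b)` with
`a, b ∈ K`, then `t • a + (1 - t) • K ⊆ K ∩ (x + K)`, so `g(x) ≥ (1 - ‖x‖)ᵈ μ(K)` where `‖·‖` is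
the gauge of `K - K`. By the layer-cake formula `∫ (1 - ‖x‖)₊ᵈ dx ≥ d B(d, d + 1) μ(K - K)`, and
`d B(d, d + 1) = 1 / C(2d, d)`; this is the Rogers–Shephard inequality
`μ(K - K) ≤ C(2d, d) μ(K)`. Finally `2K - K ⊆ x₀ + 2(K - K)` for `x₀ ∈ K`, because
`2a - b - x₀ = (a - b) + (a - x₀)` and `(K - K) + (K - K) = 2(K - K)` by convexity.
-/

open Pointwise MeasureTheory ProbabilityTheory Set Module
open scoped ENNReal Nat

theorem lintegral_Ioo_rpow_mul_one_sub_rpow {α β : ℝ} (hα : 0 < α) (hβ : 0 < β) :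
    ∫⁻ x in Ioo 0 1, ENNReal.ofReal (x ^ (α - 1) * (1 - x) ^ (β - 1)) =
      ENNReal.ofReal (beta α β) := by
  have hB := beta_pos hα hβ
  have h := lintegral_betaPDF_eq_one hα hβ
  simp_rw [lintegral_betaPDF, mul_assoc, ENNReal.ofReal_mul (one_div_pos.2 hB).le] at h
  rw [lintegral_const_mul' _ _ ENNReal.ofReal_ne_top,
    ← ENNReal.eq_div_iff (by simpa using hB) ENNReal.ofReal_ne_top] at h
  rw [h, ← ENNReal.ofReal_one, ← ENNReal.ofReal_div_of_pos (by positivity)]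
  simp

theorem choose_mul_natCast_mul_beta_eq_one {n : ℕ} (hn : 0 < n) :
    ((2 * n).choose n : ℝ) * (n * beta n (n + 1)) = 1 := by
  obtain ⟨m, rfl⟩ : ∃ m, n = m + 1 := ⟨n - 1, by omega⟩
  have h := Nat.choose_mul_factorial_mul_factorial (show m + 1 ≤ 2 * (m + 1) by omega)
  rw [show 2 * (m + 1) - (m + 1) = m + 1 by omega] at h
  have g₁ : Real.Gamma ((m + 1 : ℕ) : ℝ) = m ! := by
    rw [Nat.cast_add_one]; exact Real.Gamma_nat_eq_factorial m
  have g₂ : Real.Gamma ((m + 1 : ℕ) + (((m + 1 : ℕ) : ℝ) + 1)) = (2 * (m + 1)) ! := by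
    rw [show ((m + 1 : ℕ) : ℝ) + (((m + 1 : ℕ) : ℝ) + 1) = ((2 * (m + 1) : ℕ) : ℝ) + 1 by
      push_cast; ring]
    exact Real.Gamma_nat_eq_factorial _
  have hc : ((2 * (m + 1)).choose (m + 1) : ℝ) ≠ 0 :=
    Nat.cast_ne_zero.2 (Nat.choose_pos (by omega)).ne'
  rw [beta, g₁, g₂, Real.Gamma_nat_eq_factorial, ← h, Nat.factorial_succ]
  push_cast
  field_simp

theorem mem_gauge_smul_of_isClosed {E : Type*} [NormedAddCommGroup E] [NormedSpace ℝ E]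
    {s : Set E} (hc : Convex ℝ s) (hcl : IsClosed s) (hs₀ : s ∈ nhds 0)
    (hb : Bornology.IsBounded s) (x : E) : x ∈ gauge s x • s := by
  have habs : Absorbent ℝ s := absorbent_nhds_zero hs₀
  rcases (gauge_nonneg x).eq_or_lt with h | h
  · rw [← h, (gauge_eq_zero habs ((NormedSpace.isVonNBounded_iff ℝ).2 hb)).1 h.symm,
      zero_smul_set ⟨0, mem_of_mem_nhds hs₀⟩]
    exact mem_singleton 0
  · rw [mem_smul_set_iff_inv_smul_mem₀ h.ne']
    refine hcl.closure_subset (mem_closure_of_gauge_le_one hc (mem_of_mem_nhds hs₀) habs ?_)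
    rw [gauge_smul_of_nonneg (inv_nonneg.2 h.le), smul_eq_mul, inv_mul_cancel₀ h.ne']

theorem Convex.vadd_smul_subset_inter_vadd {E : Type*} [AddCommGroup E] [Module ℝ E] {K : Set E}
    (hK : Convex ℝ K) {a b : E} (ha : a ∈ K) (hb : b ∈ K) {t : ℝ} (ht₀ : 0 ≤ t) (ht₁ : t ≤ 1) :
    t • a +ᵥ (1 - t) • K ⊆ K ∩ (t • (a - b) +ᵥ K) := by
  rintro _ ⟨_, ⟨k, hk, rfl⟩, rfl⟩
  refine ⟨?_, mem_vadd_set.2 ⟨(1 - t) • k + t • b, ?_, ?_⟩⟩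
  · simpa [add_comm] using hK hk ha (sub_nonneg.2 ht₁) ht₀ (by ring)
  · exact hK hk hb (sub_nonneg.2 ht₁) ht₀ (by ring)
  · simp only [vadd_eq_add, smul_sub]; abel

theorem Convex.two_smul_sub_subset_vadd {E : Type*} [AddCommGroup E] [Module ℝ E] {K : Set E}
    (hK : Convex ℝ K) {x₀ : E} (hx₀ : x₀ ∈ K) : (2 : ℝ) • K - K ⊆ x₀ +ᵥ (2 : ℝ) • (K - K) := by
  have h_two : (2 : ℝ) • (K - K) = K - K + (K - K) := by
    rw [← one_add_one_eq_two, (hK.sub hK).add_smul zero_le_one zero_le_one, one_smul]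
  rintro _ ⟨_, ⟨a, ha, rfl⟩, b, hb, rfl⟩
  rw [h_two]
  refine mem_vadd_set.2
    ⟨(a - b) + (a - x₀), add_mem_add (sub_mem_sub ha hb) (sub_mem_sub ha hx₀), ?_⟩
  simp only [vadd_eq_add]
  module

section AddHaar

variable {E : Type*} [NormedAddCommGroup E] [NormedSpace ℝ E] [MeasurableSpace E] [BorelSpace E]
  [FiniteDimensional ℝ E] (μ : Measure E) [μ.IsAddHaarMeasure] {K : Set E}

noncomputable def covariogram (K : Set E) (x : E) : ℝ≥0∞ :=
  μ (K ∩ (x +ᵥ K))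

theorem lintegral_covariogram (hK : MeasurableSet K) :
    ∫⁻ x, covariogram μ K x ∂μ = μ K * μ K := by
  set χ : E → ℝ≥0∞ := K.indicator 1
  have hχ : Measurable χ := measurable_one.indicator hK
  have h_slice (x : E) : covariogram μ K x = ∫⁻ y, χ y * χ (y - x) ∂μ := by
    classical
    rw [covariogram, ← lintegral_indicator_one (hK.inter (hK.const_vadd x)), inter_indicator_one]
    congr with y
    have : y ∈ x +ᵥ K ↔ y - x ∈ K := by
      rw [mem_vadd_set_iff_neg_vadd_mem, vadd_eq_add, neg_add_eq_sub]
    rw [Pi.mul_apply, indicator_apply (x +ᵥ K), if_congr this rfl rfl]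
    rfl
  have h_swapped (y : E) : ∫⁻ x, χ y * χ (y - x) ∂μ = χ y * μ K := by
    rw [lintegral_const_mul (χ y) (f := fun x => χ (y - x)) (hχ.comp (measurable_id.const_sub y)),
      lintegral_sub_left_eq_self, lintegral_indicator_one hK]
  simp_rw [h_slice]
  rw [lintegral_lintegral_swap ((hχ.comp measurable_snd).mul
    (hχ.comp (measurable_snd.sub measurable_fst))).aemeasurable]
  simp_rw [h_swapped]
  rw [lintegral_mul_const _ hχ, lintegral_indicator_one hK]

theorem Convex.ofReal_one_sub_pow_mul_le_covariogram (hK : Convex ℝ K) {t : ℝ}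
    (ht₀ : 0 ≤ t) (ht₁ : t ≤ 1) {x : E} (hx : x ∈ t • (K - K)) :
    ENNReal.ofReal ((1 - t) ^ finrank ℝ E) * μ K ≤ covariogram μ K x := by
  obtain ⟨_, ⟨a, ha, b, hb, rfl⟩, rfl⟩ := hx
  calc ENNReal.ofReal ((1 - t) ^ finrank ℝ E) * μ K = μ (t • a +ᵥ (1 - t) • K) := by
        rw [measure_vadd, Measure.addHaar_smul, abs_of_nonneg (pow_nonneg (sub_nonneg.2 ht₁) _)]
    _ ≤ covariogram μ K (t • (a - b)) :=
        measure_mono (hK.vadd_smul_subset_inter_vadd ha hb ht₀ ht₁)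

theorem Convex.ofReal_one_sub_gauge_rpow_mul_le_covariogram (hKc : IsCompact K)
    (hK : Convex ℝ K) (hK₀ : K - K ∈ nhds 0) (hd : 0 < finrank ℝ E) (x : E) :
    ENNReal.ofReal (max (1 - gauge (K - K) x) 0 ^ (finrank ℝ E : ℝ)) * μ K ≤
      covariogram μ K x := by
  rcases lt_or_ge (gauge (K - K) x) 1 with hx | hx
  · have hDc : IsCompact (K - K) := by rw [sub_eq_add_neg]; exact hKc.add hKc.neg
    rw [max_eq_left (sub_nonneg.2 hx.le), Real.rpow_natCast]
    exact hK.ofReal_one_sub_pow_mul_le_covariogram μ (gauge_nonneg x) hx.le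
      (mem_gauge_smul_of_isClosed (hK.sub hK) hDc.isClosed hK₀ hDc.isBounded x)
  · rw [max_eq_right (sub_nonpos.2 hx), Real.zero_rpow (Nat.cast_ne_zero.2 hd.ne'),
      ENNReal.ofReal_zero, zero_mul]
    exact zero_le

theorem Convex.ofReal_mul_beta_mul_addHaar_le_lintegral_one_sub_gauge {D : Set E}
    (hD : Convex ℝ D) (hD₀ : D ∈ nhds 0) (hd : 0 < finrank ℝ E) :
    ENNReal.ofReal (finrank ℝ E * beta (finrank ℝ E) (finrank ℝ E + 1)) * μ D ≤
      ∫⁻ x, ENNReal.ofReal (max (1 - gauge D x) 0 ^ (finrank ℝ E : ℝ)) ∂μ := by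
  set d := finrank ℝ E
  set f : E → ℝ := fun x => max (1 - gauge D x) 0
  have hd' : (0 : ℝ) < d := Nat.cast_pos.2 hd
  have hf : Measurable f :=
    ((continuous_const.sub (continuous_gauge hD hD₀)).max continuous_const).measurable
  have h_level {t : ℝ} (ht : t ≤ 1) : (1 - t) • D ⊆ {x | t ≤ f x} := fun x hx => by
    have := gauge_le_of_mem (sub_nonneg.2 ht) hx
    exact le_max_of_le_left (show t ≤ 1 - gauge D x by linarith)
  have h_slice : ∀ t ∈ Ioo (0 : ℝ) 1, μ ((1 - t) • D) * ENNReal.ofReal (t ^ ((d : ℝ) - 1)) =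
      μ D * ENNReal.ofReal (t ^ ((d : ℝ) - 1) * (1 - t) ^ ((d + 1 : ℝ) - 1)) := by
    intro t ht
    rw [Measure.addHaar_smul, add_sub_cancel_right, Real.rpow_natCast,
      abs_of_nonneg (pow_nonneg (sub_nonneg.2 ht.2.le) _),
      ENNReal.ofReal_mul (Real.rpow_nonneg ht.1.le _)]
    ring
  rw [lintegral_rpow_eq_lintegral_meas_le_mul μ (f := f)
    (Filter.Eventually.of_forall fun _ => le_max_right _ _) hf.aemeasurable hd']
  calc ENNReal.ofReal (d * beta d (d + 1)) * μ D
      = ENNReal.ofReal d *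
          ∫⁻ t in Ioo 0 1, μ ((1 - t) • D) * ENNReal.ofReal (t ^ ((d : ℝ) - 1)) := by
        rw [setLIntegral_congr_fun measurableSet_Ioo h_slice, lintegral_const_mul _ (by fun_prop),
          lintegral_Ioo_rpow_mul_one_sub_rpow hd' (by positivity), ENNReal.ofReal_mul hd'.le]
        ring
    _ ≤ ENNReal.ofReal d *
          ∫⁻ t in Ioo 0 1, μ {x | t ≤ f x} * ENNReal.ofReal (t ^ ((d : ℝ) - 1)) := by
        refine mul_le_mul_right (setLIntegral_mono' measurableSet_Ioo fun t ht => ?_) _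
        gcongr
        exact h_level ht.2.le
    _ ≤ _ := by
        gcongr
        exact Ioo_subset_Ioi_self

theorem Convex.addHaar_sub_le (hKc : IsCompact K) (hK : Convex ℝ K)
    (hKint : (interior K).Nonempty) :
    μ (K - K) ≤ (2 * finrank ℝ E).choose (finrank ℝ E) * μ K := by
  set d := finrank ℝ E
  have hV₀ : μ K ≠ 0 :=
    ((isOpen_interior.measure_pos μ hKint).trans_le (measure_mono interior_subset)).ne'
  have hV : μ K ≠ ∞ := hKc.measure_lt_top.ne
  rcases d.eq_zero_or_pos with hd | hd
  · have : Subsingleton E := finrank_zero_iff.1 hd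
    rw [(hKint.mono interior_subset).eq_univ, hd]
    simp
  set c := ENNReal.ofReal (d * beta d (d + 1))
  have hK₀ : K - K ∈ nhds 0 :=
    Measure.sub_mem_nhds_zero_of_addHaar_pos μ K hKc.measurableSet (pos_iff_ne_zero.2 hV₀)
  have h_key : μ K * (c * μ (K - K)) ≤ μ K * μ K := calc
    μ K * (c * μ (K - K))
      ≤ μ K * ∫⁻ x, ENNReal.ofReal (max (1 - gauge (K - K) x) 0 ^ (d : ℝ)) ∂μ := by
        gcongr
        exact (hK.sub hK).ofReal_mul_beta_mul_addHaar_le_lintegral_one_sub_gauge μ hK₀ hd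
    _ = ∫⁻ x, ENNReal.ofReal (max (1 - gauge (K - K) x) 0 ^ (d : ℝ)) * μ K ∂μ := by
        rw [lintegral_mul_const' _ _ hV, mul_comm]
    _ ≤ ∫⁻ x, covariogram μ K x ∂μ :=
        lintegral_mono (hK.ofReal_one_sub_gauge_rpow_mul_le_covariogram μ hKc hK₀ hd)
    _ = μ K * μ K := lintegral_covariogram μ hKc.measurableSet
  have hc : ((2 * d).choose d : ℝ≥0∞) * c = 1 := by
    rw [← ENNReal.ofReal_natCast, ← ENNReal.ofReal_mul (Nat.cast_nonneg _),
      choose_mul_natCast_mul_beta_eq_one hd, ENNReal.ofReal_one]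
  calc μ (K - K) = (2 * d).choose d * (c * μ (K - K)) := by rw [← mul_assoc, hc, one_mul]
    _ ≤ (2 * d).choose d * μ K := by
        gcongr
        exact (ENNReal.mul_le_mul_iff_right hV₀ hV).1 h_key

theorem Convex.addHaar_two_smul_sub_le (hKc : IsCompact K) (hK : Convex ℝ K)
    (hKint : (interior K).Nonempty) :
    μ ((2 : ℝ) • K - K) ≤ 2 ^ finrank ℝ E * (2 * finrank ℝ E).choose (finrank ℝ E) * μ K := by
  obtain ⟨x₀, hx₀⟩ := hKint.mono interior_subset
  calc μ ((2 : ℝ) • K - K) ≤ μ (x₀ +ᵥ (2 : ℝ) • (K - K)) :=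
        measure_mono (hK.two_smul_sub_subset_vadd hx₀)
    _ = 2 ^ finrank ℝ E * μ (K - K) := by
        rw [measure_vadd, Measure.addHaar_smul, abs_of_nonneg (by positivity),
          ENNReal.ofReal_pow zero_le_two, ENNReal.ofReal_ofNat]
    _ ≤ 2 ^ finrank ℝ E * ((2 * finrank ℝ E).choose (finrank ℝ E) * μ K) := by
        gcongr
        exact hK.addHaar_sub_le μ hKc hKint
    _ = _ := by rw [mul_assoc]

end AddHaar

/-- For a convex body `K ⊆ ℝⁿ`, `vol(2K - K) ≤ 2ⁿ · C(2n, n) · vol(K)`.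
This follows from the Rogers–Shephard inequality. -/
theorem volume_two_smul_sub_le
    (n : ℕ) (K : Set (EuclideanSpace ℝ (Fin n)))
    (hKc : IsCompact K) (hKconv : Convex ℝ K) (hKint : (interior K).Nonempty) :
    volume ((2 : ℝ) • K - K) ≤ (2 ^ n * ((2 * n).choose n) : ℕ) * volume K := by
  have h := hKconv.addHaar_two_smul_sub_le volume hKc hKint
  rw [finrank_euclideanSpace_fin] at h
  exact_mod_cast h
end

section
/- Let S ⊆ ℝⁿ be a finite strictly antipodal set and let K = conv(S). Then the translates {K + s : s ∈ S} are pairwise touching: for any two distinct points x₁, x₂ ∈ S, (K + x₁) ∩ (K + x₂) = {x₁ + x₂}. -/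
open Pointwise

/-- If `S ⊆ ℝⁿ` is a finite strictly antipodal set and `K = conv S`, then the
translates `K + s`, `s ∈ S`, are pairwise touching: for distinct `x₁, x₂ ∈ S`,
`(K + x₁) ∩ (K + x₂) = {x₁ + x₂}`. -/
theorem strictly_antipodal_translates_touch
    (n : ℕ) (S : Set (EuclideanSpace ℝ (Fin n))) (hSfin : S.Finite)
    (hanti : ∀ x₁ ∈ S, ∀ x₂ ∈ S, x₁ ≠ x₂ →
      ∃ f : EuclideanSpace ℝ (Fin n) →ₗ[ℝ] ℝ, f ≠ 0 ∧
        (∀ y ∈ S, y ≠ x₁ → f y < f x₁) ∧ (∀ y ∈ S, y ≠ x₂ → f x₂ < f y)) :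
    ∀ x₁ ∈ S, ∀ x₂ ∈ S, x₁ ≠ x₂ →
      (convexHull ℝ S + {x₁}) ∩ (convexHull ℝ S + {x₂}) = {x₁ + x₂} := by
  intro x₁ h1 x₂ h2 hne
  obtain ⟨f, -, hmax, hmin⟩ := hanti x₁ h1 x₂ h2 hne
  have hub : ∀ y ∈ convexHull ℝ S, f y ≤ f x₁ := by
    intro y hy
    refine convexHull_min (fun y hy => ?_) (convex_halfSpace_le f.isLinear (f x₁)) hy
    by_cases h : y = x₁
    · simp [h]
    · exact (hmax y hy h).le
  have hlbS : ∀ y ∈ S, f x₂ ≤ f y := by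
    intro y hy
    by_cases h : y = x₂
    · simp [h]
    · exact (hmin y hy h).le
  have hlb : ∀ y ∈ convexHull ℝ S, f x₂ ≤ f y := fun y hy =>
    convexHull_min hlbS (convex_halfSpace_ge f.isLinear (f x₂)) hy
  have huniq : ∀ a ∈ convexHull ℝ S, f a = f x₂ → a = x₂ := by
    intro a ha hfa
    rw [← hSfin.coe_toFinset, Finset.convexHull_eq] at ha
    obtain ⟨w, hw0, hw1, hwa⟩ := ha
    rw [Finset.centerMass_eq_of_sum_1 _ _ hw1] at hwa
    have hfa' : ∑ i ∈ hSfin.toFinset, w i * f i = f x₂ := by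
      rw [← hfa, ← hwa]
      simp [map_sum, smul_eq_mul]
    by_cases hall : ∀ i ∈ hSfin.toFinset, w i ≠ 0 → i = x₂
    · rw [← hwa]
      have hsc : ∀ i ∈ hSfin.toFinset, w i • (id i : EuclideanSpace ℝ (Fin n)) = w i • x₂ := by
        intro i hi
        by_cases h : w i = 0
        · simp [h]
        · rw [hall i hi h]; rfl
      rw [Finset.sum_congr rfl hsc, ← Finset.sum_smul, hw1, one_smul]
    · push_neg at hall
      obtain ⟨i₀, hi₀t, hwi₀, hi₀x⟩ := hall
      have hlt : ∑ i ∈ hSfin.toFinset, w i * f x₂ < ∑ i ∈ hSfin.toFinset, w i * f i := by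
        refine Finset.sum_lt_sum (fun i hi => ?_) ⟨i₀, hi₀t, ?_⟩
        · exact mul_le_mul_of_nonneg_left (hlbS i (hSfin.mem_toFinset.mp hi)) (hw0 i hi)
        · exact mul_lt_mul_of_pos_left (hmin i₀ (hSfin.mem_toFinset.mp hi₀t) hi₀x)
            (lt_of_le_of_ne (hw0 i₀ hi₀t) (Ne.symm hwi₀))
      rw [← Finset.sum_mul, hw1, one_mul, hfa'] at hlt
      exact absurd hlt (lt_irrefl _)
  ext z
  simp only [Set.mem_inter_iff, Set.add_singleton, Set.mem_image, Set.mem_singleton_iff]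
  constructor
  · rintro ⟨⟨a, ha, rfl⟩, ⟨b, hb, hab⟩⟩
    have hfab : f a + f x₁ = f b + f x₂ := by
      simpa [map_add] using congrArg f hab.symm
    have hfa : f a = f x₂ := le_antisymm (by linarith [hub b hb]) (hlb a ha)
    have := huniq a ha hfa
    rw [this, add_comm]
  · rintro rfl
    exact ⟨⟨x₂, subset_convexHull ℝ S h2, add_comm x₂ x₁⟩,
      ⟨x₁, subset_convexHull ℝ S h1, rfl⟩⟩
end

section
/- Let S ⊆ ℝⁿ be a finite strictly antipodal set and let K = conv(S). Then no three members of the family {K + s : s ∈ S} have a common point: for any three distinct points x₁, x₂, x₃ ∈ S, (K + x₁) ∩ (K + x₂) ∩ (K + x₃) = ∅. -/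
open Pointwise

/-- If `f` attains its strict minimum over a finite set `s` at `x`, then the only point of
`conv s` where `f` is `≤ f x` is `x` itself. -/
lemma aux_unique_min {E : Type*} [AddCommGroup E] [Module ℝ E]
    (s : Finset E) (f : E →ₗ[ℝ] ℝ) (x : E) (hx : x ∈ s)
    (hmin : ∀ y ∈ s, y ≠ x → f x < f y) {a : E}
    (ha : a ∈ convexHull ℝ (s : Set E)) (hfa : f a ≤ f x) : a = x := by
  rw [Finset.convexHull_eq] at ha
  obtain ⟨w, hw0, hw1, hwc⟩ := ha
  have hsum : a = ∑ y ∈ s, w y • y := by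
    rw [← hwc, Finset.centerMass_eq_of_sum_1 _ _ hw1]
    rfl
  have hfsum : f a = ∑ y ∈ s, w y * f y := by
    rw [hsum, map_sum]
    simp [smul_eq_mul]
  by_cases hall : ∀ y ∈ s, y ≠ x → w y = 0
  · have hwx : w x = 1 := by
      rw [← hw1]
      exact (Finset.sum_eq_single_of_mem x hx (fun b hb hbx => hall b hb hbx)).symm
    have : a = w x • x := by
      rw [hsum]
      exact Finset.sum_eq_single_of_mem x hx (fun b hb hbx => by rw [hall b hb hbx, zero_smul])
    rw [this, hwx, one_smul]
  · push_neg at hall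
    obtain ⟨y₀, hy₀s, hy₀ne, hy₀w⟩ := hall
    have hy₀pos : 0 < w y₀ := lt_of_le_of_ne (hw0 _ hy₀s) (Ne.symm hy₀w)
    have hlt : f x < f a := by
      calc f x = ∑ y ∈ s, w y * f x := by rw [← Finset.sum_mul, hw1, one_mul]
        _ < ∑ y ∈ s, w y * f y := by
            refine Finset.sum_lt_sum (fun i hi => ?_) ⟨y₀, hy₀s, ?_⟩
            · by_cases hix : i = x
              · rw [hix]
              · exact mul_le_mul_of_nonneg_left (hmin i hi hix).le (hw0 i hi)
            · exact mul_lt_mul_of_pos_left (hmin y₀ hy₀s hy₀ne) hy₀pos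
        _ = f a := hfsum.symm
    linarith

/-- If `S ⊆ ℝⁿ` is a finite strictly antipodal set and `K = conv S`, then no
three members of `{K + s : s ∈ S}` have a common point: for distinct `x₁, x₂, x₃ ∈ S`,
`(K + x₁) ∩ (K + x₂) ∩ (K + x₃) = ∅`. -/
theorem strictly_antipodal_no_three_common
    (n : ℕ) (S : Set (EuclideanSpace ℝ (Fin n))) (hSfin : S.Finite)
    (hanti : ∀ x₁ ∈ S, ∀ x₂ ∈ S, x₁ ≠ x₂ →
      ∃ f : EuclideanSpace ℝ (Fin n) →ₗ[ℝ] ℝ, f ≠ 0 ∧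
        (∀ y ∈ S, y ≠ x₁ → f y < f x₁) ∧ (∀ y ∈ S, y ≠ x₂ → f x₂ < f y)) :
    ∀ x₁ ∈ S, ∀ x₂ ∈ S, ∀ x₃ ∈ S, x₁ ≠ x₂ → x₁ ≠ x₃ → x₂ ≠ x₃ →
      (convexHull ℝ S + {x₁}) ∩ (convexHull ℝ S + {x₂}) ∩ (convexHull ℝ S + {x₃}) = ∅ := by
  intro x₁ h₁ x₂ h₂ x₃ h₃ n12 n13 n23
  -- key: any common point of K + x and K + y (x ≠ y in S) equals y + x
  have key : ∀ x ∈ S, ∀ y ∈ S, x ≠ y → ∀ z,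
      z ∈ (convexHull ℝ S + ({x} : Set (EuclideanSpace ℝ (Fin n)))) →
      z ∈ (convexHull ℝ S + ({y} : Set (EuclideanSpace ℝ (Fin n)))) → z = y + x := by
    intro x hx y hy hxy z hz1 hz2
    obtain ⟨f, hf0, hmax, hmin⟩ := hanti x hx y hy hxy
    obtain ⟨a, ha, x', hx', hax⟩ := hz1
    obtain ⟨b, hb, y', hy', hby⟩ := hz2
    rw [Set.mem_singleton_iff] at hx' hy'
    rw [hx'] at hax
    rw [hy'] at hby
    have hax2 : a + x = z := hax
    have hby2 : b + y = z := hby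
    have hfa : f y ≤ f a := by
      have hsub : convexHull ℝ S ⊆ {w | f y ≤ f w} := by
        refine convexHull_min (fun u hu => ?_) (convex_halfSpace_ge f.isLinear (f y))
        by_cases huy : u = y
        · rw [huy]; exact le_refl (f y)
        · exact (hmin u hu huy).le
      exact hsub ha
    have hfb : f b ≤ f x := by
      have hsub : convexHull ℝ S ⊆ {w | f w ≤ f x} := by
        refine convexHull_min (fun u hu => ?_) (convex_halfSpace_le f.isLinear (f x))
        by_cases hux : u = x
        · rw [hux]; exact le_refl (f x)
        · exact (hmax u hu hux).le
      exact hsub hb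
    have heq : f a + f x = f b + f y := by
      have : f (a + x) = f (b + y) := by rw [hax2, hby2]
      simpa [map_add] using this
    have hfay : f a ≤ f y := by linarith
    -- a = y via unique minimizer
    have ha' : a ∈ convexHull ℝ (hSfin.toFinset : Set (EuclideanSpace ℝ (Fin n))) := by
      rwa [hSfin.coe_toFinset]
    have hyy : y ∈ hSfin.toFinset := hSfin.mem_toFinset.mpr hy
    have hmin' : ∀ u ∈ hSfin.toFinset, u ≠ y → f y < f u := fun u hu hune =>
      hmin u (hSfin.mem_toFinset.mp hu) hune
    have : a = y := aux_unique_min hSfin.toFinset f y hyy hmin' ha' hfay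
    rw [← hax2, this]
  rw [Set.eq_empty_iff_forall_notMem]
  rintro z ⟨⟨hz1, hz2⟩, hz3⟩
  have e2 : z = x₂ + x₁ := key x₁ h₁ x₂ h₂ n12 z hz1 hz2
  have e3 : z = x₃ + x₁ := key x₁ h₁ x₃ h₃ n13 z hz1 hz3
  exact n23 (add_right_cancel (e2.symm.trans e3))
end

section
/- Let S ⊆ ℝⁿ be a finite strictly antipodal set with |S| ≥ 2 and let K = conv(S). Then the family 𝓕 = {K + s : s ∈ S} satisfies ν(𝓕) = 1 (any two members intersect) and every transversal of 𝓕 has cardinality at least |S|/2; in particular τ(𝓕) ≥ |S|/2. -/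
open Pointwise

variable {E : Type*} [NormedAddCommGroup E] [NormedSpace ℝ E]

lemma strict_max_hull (S : Finset E) (f : E →ₗ[ℝ] ℝ) (s : E) (hs : s ∈ S)
    (hmax : ∀ y ∈ S, y ≠ s → f y < f s) :
    ∀ z ∈ convexHull ℝ (S : Set E), f z ≤ f s ∧ (f z = f s → z = s) := by
  intro z hz
  rw [Finset.mem_convexHull] at hz
  obtain ⟨w, hw0, hw1, hwc⟩ := hz
  have hzz : z = ∑ i ∈ S, w i • i := by
    rw [← hwc, Finset.centerMass_eq_of_sum_1 _ _ hw1]; simp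
  have hfz : f z = ∑ i ∈ S, w i * f i := by
    rw [hzz, map_sum]; simp [smul_eq_mul]
  have hkey : ∑ i ∈ S, w i * (f s - f i) = f s - f z := by
    simp only [mul_sub]
    rw [Finset.sum_sub_distrib, ← Finset.sum_mul, hw1, one_mul, hfz]
  have hterm : ∀ i ∈ S, 0 ≤ w i * (f s - f i) := by
    intro i hi
    apply mul_nonneg (hw0 i hi)
    rcases eq_or_ne i s with rfl | h
    · simp
    · linarith [hmax i hi h]
  have hle : f z ≤ f s := by
    have := Finset.sum_nonneg hterm
    rw [hkey] at this; linarith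
  refine ⟨hle, fun heq => ?_⟩
  have hz0 : ∑ i ∈ S, w i * (f s - f i) = 0 := by rw [hkey, heq, sub_self]
  have hall := (Finset.sum_eq_zero_iff_of_nonneg hterm).1 hz0
  have hw' : ∀ i ∈ S, i ≠ s → w i = 0 := by
    intro i hi hne
    have h1 := hall i hi
    have h2 : f s - f i ≠ 0 := by have := hmax i hi hne; linarith
    exact (mul_eq_zero.1 h1).resolve_right h2
  have hws : w s = 1 := by
    rw [← hw1, Finset.sum_eq_single s (fun i hi hne => hw' i hi hne) (fun h => absurd hs h)]
  rw [hzz, Finset.sum_eq_single s (fun i hi hne => by rw [hw' i hi hne, zero_smul])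
    (fun h => absurd hs h), hws, one_smul]

lemma unique_sum (S : Finset E) (x s₁ s₂ : E) (h₁ : s₁ ∈ S) (h₂ : s₂ ∈ S)
    (f : E →ₗ[ℝ] ℝ)
    (hmax : ∀ y ∈ S, y ≠ s₁ → f y < f s₁) (hmin : ∀ y ∈ S, y ≠ s₂ → f s₂ < f y)
    (hx₁ : x - s₁ ∈ convexHull ℝ (S : Set E)) (hx₂ : x - s₂ ∈ convexHull ℝ (S : Set E)) :
    x = s₁ + s₂ := by
  have A := strict_max_hull S f s₁ h₁ hmax (x - s₂) hx₂
  have B := strict_max_hull S (-f) s₂ h₂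
    (fun y hy hne => by simpa using neg_lt_neg (hmin y hy hne)) (x - s₁) hx₁
  simp only [LinearMap.neg_apply, neg_le_neg_iff, map_sub, neg_sub, neg_inj] at A B
  have hB : -f x - -f s₁ = -f s₂ := by linarith [A.1, B.1]
  have hxx : x - s₁ = s₂ := B.2 hB
  rw [sub_eq_iff_eq_add] at hxx
  rw [hxx, add_comm]

/-- If `S ⊆ ℝⁿ` is a finite strictly antipodal set with `|S| ≥ 2` and
`K = conv S`, then any two members of the family `{K + s : s ∈ S}` intersect (so its
independence number is 1), while every transversal of the family has at least `|S| / 2`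
points. -/
theorem strictly_antipodal_family_nu_tau
    (n : ℕ) (S : Finset (EuclideanSpace ℝ (Fin n))) (hS : 2 ≤ S.card)
    (hanti : ∀ x₁ ∈ S, ∀ x₂ ∈ S, x₁ ≠ x₂ →
      ∃ f : EuclideanSpace ℝ (Fin n) →ₗ[ℝ] ℝ, f ≠ 0 ∧
        (∀ y ∈ S, y ≠ x₁ → f y < f x₁) ∧ (∀ y ∈ S, y ≠ x₂ → f x₂ < f y)) :
    (∀ x₁ ∈ S, ∀ x₂ ∈ S,
      ((convexHull ℝ (S : Set (EuclideanSpace ℝ (Fin n))) + {x₁}) ∩ (convexHull ℝ (S : Set (EuclideanSpace ℝ (Fin n))) + {x₂})).Nonempty) ∧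
    (∀ T : Finset (EuclideanSpace ℝ (Fin n)),
      (∀ s ∈ S, ∃ x ∈ T, x ∈ convexHull ℝ (S : Set (EuclideanSpace ℝ (Fin n))) + {s}) →
      (S.card : ℝ) / 2 ≤ T.card) := by
  classical
  constructor
  · intro x₁ hx₁ x₂ hx₂
    refine ⟨x₁ + x₂, ?_, ?_⟩
    · rw [show x₁ + x₂ = x₂ + x₁ from add_comm _ _]
      exact Set.add_mem_add (subset_convexHull ℝ _ (Finset.mem_coe.2 hx₂)) rfl
    · exact Set.add_mem_add (subset_convexHull ℝ _ (Finset.mem_coe.2 hx₁)) rfl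
  · intro T hT
    have hT' : ∀ s ∈ S, ∃ x ∈ T, x - s ∈ convexHull ℝ (S : Set (EuclideanSpace ℝ (Fin n))) := by
      intro s hs
      obtain ⟨x, hxT, hxK⟩ := hT s hs
      obtain ⟨a, ha, b, hb, hab⟩ := hxK
      rw [Set.mem_singleton_iff] at hb
      refine ⟨x, hxT, ?_⟩
      have hxs : x - s = a := by rw [← hab, hb]; exact add_sub_cancel_right a s
      rwa [hxs]
    set g : EuclideanSpace ℝ (Fin n) → EuclideanSpace ℝ (Fin n) := fun s => if h : ∃ x ∈ T, x - s ∈ convexHull ℝ (S : Set (EuclideanSpace ℝ (Fin n))) then h.choose else 0 with hg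
    have hgspec : ∀ s ∈ S, g s ∈ T ∧ g s - s ∈ convexHull ℝ (S : Set (EuclideanSpace ℝ (Fin n))) := by
      intro s hs
      have h := hT' s hs
      simp only [hg, dif_pos h]
      exact ⟨h.choose_spec.1, h.choose_spec.2⟩
    have hmaps : ∀ s ∈ S, g s ∈ T := fun s hs => (hgspec s hs).1
    have hfiber : ∀ a ∈ T, (S.filter fun s => g s = a).card ≤ 2 := by
      intro a _
      by_contra h
      push_neg at h
      obtain ⟨s₁, s₂, s₃, hm₁, hm₂, hm₃, h12, h13, h23⟩ :=
        Finset.two_lt_card_iff.1 h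
      simp only [Finset.mem_filter] at hm₁ hm₂ hm₃
      have k₁ : a - s₁ ∈ convexHull ℝ (S : Set (EuclideanSpace ℝ (Fin n))) := hm₁.2 ▸ (hgspec s₁ hm₁.1).2
      have k₂ : a - s₂ ∈ convexHull ℝ (S : Set (EuclideanSpace ℝ (Fin n))) := hm₂.2 ▸ (hgspec s₂ hm₂.1).2
      have k₃ : a - s₃ ∈ convexHull ℝ (S : Set (EuclideanSpace ℝ (Fin n))) := hm₃.2 ▸ (hgspec s₃ hm₃.1).2
      obtain ⟨f, -, hmax, hmin⟩ := hanti s₁ hm₁.1 s₂ hm₂.1 h12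
      have e12 : a = s₁ + s₂ := unique_sum S a s₁ s₂ hm₁.1 hm₂.1 f hmax hmin k₁ k₂
      obtain ⟨f', -, hmax', hmin'⟩ := hanti s₁ hm₁.1 s₃ hm₃.1 h13
      have e13 : a = s₁ + s₃ := unique_sum S a s₁ s₃ hm₁.1 hm₃.1 f' hmax' hmin' k₁ k₃
      apply h23
      have : s₁ + s₂ = s₁ + s₃ := by rw [← e12, ← e13]
      exact add_left_cancel this
    have hcard : S.card ≤ 2 * T.card :=
      Finset.card_le_mul_card_image_of_maps_to hmaps 2 hfiber
    have : (S.card : ℝ) ≤ 2 * T.card := by exact_mod_cast hcard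
    linarith
end

section
/- Let x₁, x₂, x₃, x₄ ∈ ℝ² be four distinct points in convex position in this cyclic order (i.e., the open segments (x₁, x₃) and (x₂, x₄) intersect). Let C ⊆ ℝ² be a convex set, let λ ≥ 1 and t ∈ ℝ². Then it is impossible that simultaneously x₁, x₃ ∈ C, x₂, x₄ ∉ C, x₂, x₄ ∈ λC + t, and x₁, x₃ ∉ λC + t. -/
set_option maxHeartbeats 1000000

open Pointwise

private lemma mem_of_comb3 {E : Type*} [AddCommGroup E] [Module ℝ E]
    {C : Set E} (hC : Convex ℝ C)
    {v1 v2 v3 v : E} (h1 : v1 ∈ C) (h2 : v2 ∈ C) (h3 : v3 ∈ C)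
    {w1 w2 w3 d : ℝ}
    (hw1 : 0 ≤ w1) (hw2 : 0 ≤ w2) (hw3 : 0 ≤ w3) (hd : 0 < d)
    (hsum : w1 + w2 + w3 = d) (hv : w1 • v1 + w2 • v2 + w3 • v3 = d • v) : v ∈ C := by
  have hd0 : d ≠ 0 := ne_of_gt hd
  have key : (w1/d) • v1 + (w2/d) • v2 + (w3/d) • v3 ∈ C := by
    have h := hC.sum_mem (t := (Finset.univ : Finset (Fin 3)))
      (show ∀ i ∈ Finset.univ, 0 ≤ (![w1/d, w2/d, w3/d]) i by
        intro i _; fin_cases i <;> simp <;> positivity)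
      (show ∑ i, (![w1/d, w2/d, w3/d]) i = 1 by
        simp only [Fin.sum_univ_three, Matrix.cons_val_zero, Matrix.cons_val_one,
          Matrix.head_cons, Matrix.cons_val_two, Matrix.tail_cons]
        field_simp; linarith)
      (show ∀ i ∈ Finset.univ, (![v1, v2, v3]) i ∈ C by
        intro i _; fin_cases i <;> simpa)
    simpa [Fin.sum_univ_three] using h
  have hveq : v = (w1/d) • v1 + (w2/d) • v2 + (w3/d) • v3 := by
    have h0 : v = d⁻¹ • (w1 • v1 + w2 • v2 + w3 • v3) := by
      rw [hv, smul_smul, inv_mul_cancel₀ hd0, one_smul]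
    rw [h0, smul_add, smul_add, smul_smul, smul_smul, smul_smul,
      div_eq_inv_mul, div_eq_inv_mul, div_eq_inv_mul]
  rw [hveq]; exact key

private lemma core_indep {E : Type*} [AddCommGroup E] [Module ℝ E]
    {C : Set E} (hC : Convex ℝ C) {p X Y : E} {α β k c m : ℝ}
    (hα : 0 < α) (hβ : 0 < β) (hk0 : 0 < k) (hk1 : k ≤ 1)
    (h1C : p + X ∈ C) (h3C : p - α • X ∈ C)
    (hy2C : p + c • X + (k + m) • Y ∈ C) (hy4C : p + c • X + (m - β * k) • Y ∈ C)
    (h2C : p + Y ∉ C) (h4C : p - β • Y ∉ C)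
    (hy1C : p + (k + c) • X + m • Y ∉ C)
    (hy3C : p + (c - α * k) • X + m • Y ∉ C) : False := by
  have case1 : 0 ≤ m - (1 - k) + c → 0 ≤ α * m - α * (1 - k) - c → False := by
    intro hX hY
    have hm : 1 - k ≤ m := by
      by_contra h'
      push_neg at h'
      nlinarith [mul_pos hα (show (0:ℝ) < (1 - k) - m by linarith)]
    have hd : 0 < (m + k) * (1 + α) :=
      mul_pos (by linarith) (by linarith)
    exact h2C <| mem_of_comb3 hC h1C h3C hy2C
      (w1 := α*(m+k-1) - c) (w2 := m+k-1+c) (w3 := 1+α) (d := (m+k)*(1+α))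
      (by linarith) (by linarith) (by linarith) hd (by ring) (by module)
  have case2 : m - β * (c - (1 - k)) ≤ 0 → α * m + β * (α * (1 - k) + c) ≤ 0 → False := by
    intro hZ hW
    have hmb : m ≤ -β * (1 - k) := by
      by_contra h'
      push_neg at h'
      nlinarith [mul_pos hα (show (0:ℝ) < m + β * (1 - k) by linarith)]
    have hh2 : 0 < β * k - m := by nlinarith
    have hd : 0 < (β * k - m) * (1 + α) := mul_pos hh2 (by linarith)
    exact h4C <| mem_of_comb3 hC h1C h3C hy4C
      (w1 := α*(β*k-m-β) - c*β) (w2 := β*k-m-β+c*β) (w3 := (1+α)*β)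
      (d := (β*k-m)*(1+α))
      (by linarith) (by linarith) (by positivity) hd (by ring) (by module)
  have case3 : c ≤ 1 - k → m - (1 - k) + c ≤ 0 → 0 ≤ m - β * (c - (1 - k)) → False := by
    intro hcg hX hZ
    have hd : 0 < (1 - c) * (1 + β) :=
      mul_pos (by linarith) (by linarith)
    exact hy1C <| mem_of_comb3 hC h1C hy2C hy4C
      (w1 := k*(1+β)) (w2 := β*(1-c-k)+m) (w3 := 1-c-k-m) (d := (1-c)*(1+β))
      (by positivity) (by linarith) (by linarith) hd (by ring) (by module)
  have case4 : -(α * (1 - k)) ≤ c → α * m - α * (1 - k) - c ≤ 0 →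
      0 ≤ α * m + β * (α * (1 - k) + c) → False := by
    intro hcag hY hW
    have hαk : 0 < α * k := mul_pos hα hk0
    have hα1k : 0 ≤ α * (1 - k) := mul_nonneg hα.le (by linarith)
    have hF : 0 < α + c := by nlinarith
    have hd : 0 < (α + c) * (1 + β) := mul_pos hF (by linarith)
    exact hy3C <| mem_of_comb3 hC h3C hy2C hy4C
      (w1 := α*k*(1+β)) (w2 := β*(α+c-α*k)+α*m) (w3 := α+c-α*k-α*m)
      (d := (α+c)*(1+β))
      (by positivity) (by linarith) (by linarith) hd (by ring) (by module)
  have h1k : (0:ℝ) ≤ 1 - k := by linarith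
  have hα1k : 0 ≤ α * (1 - k) := mul_nonneg hα.le h1k
  rcases le_or_gt c (1 - k) with hcg | hcg
  · rcases le_or_gt (-(α * (1 - k))) c with hcag | hcag
    · rcases le_or_gt (m - (1 - k) + c) 0 with hX | hX
      · rcases le_or_gt 0 (m - β * (c - (1 - k))) with hZ | hZ
        · exact case3 hcg hX hZ
        · rcases le_or_gt (α * m + β * (α * (1 - k) + c)) 0 with hW | hW
          · exact case2 hZ.le hW
          · have hc : 0 < c := by
              by_contra hc'
              push_neg at hc'
              have h1 : (β * (1 + α)) * c ≤ 0 :=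
                mul_nonpos_of_nonneg_of_nonpos (by positivity) hc'
              nlinarith [mul_pos hα (neg_pos.mpr hZ)]
            have hY : α * m - α * (1 - k) - c ≤ 0 := by
              nlinarith [mul_nonpos_of_nonneg_of_nonpos hα.le hX]
            exact case4 hcag hY hW.le
      · rcases le_or_gt 0 (α * m - α * (1 - k) - c) with hY | hY
        · exact case1 hX.le hY
        · have hc : 0 < c := by
            by_contra hc'
            push_neg at hc'
            have h1 : ((1 + α)) * c ≤ 0 :=
              mul_nonpos_of_nonneg_of_nonpos (by positivity) hc'
            nlinarith [mul_pos hα hX]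
          have hZ : 0 < m - β * (c - (1 - k)) := by
            nlinarith [mul_pos (mul_pos hβ (show (0:ℝ) < 1 + α by linarith)) hc,
              mul_pos hα hX]
          have hW : 0 ≤ α * m + β * (α * (1 - k) + c) := by
            nlinarith [mul_pos hα hZ,
              mul_pos (mul_pos hβ (show (0:ℝ) < 1 + α by linarith)) hc]
          exact case4 hcag hY.le hW
    · have hc0 : c < 0 := by linarith
      rcases le_or_gt 0 (m - (1 - k) + c) with hX | hX
      · have hY : 0 ≤ α * m - α * (1 - k) - c := by
          nlinarith [mul_nonneg hα.le hX,
            mul_neg_of_pos_of_neg (show (0:ℝ) < 1 + α by linarith) hc0]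
        exact case1 hX hY
      · rcases le_or_gt 0 (m - β * (c - (1 - k))) with hZ | hZ
        · exact case3 hcg hX.le hZ
        · have hW : α * m + β * (α * (1 - k) + c) ≤ 0 := by
            nlinarith [mul_neg_of_pos_of_neg hα hZ,
              mul_neg_of_pos_of_neg (mul_pos hβ (show (0:ℝ) < 1 + α by linarith)) hc0]
          exact case2 hZ.le hW
  · have hc0 : 0 < c := lt_of_le_of_lt (by linarith) hcg
    rcases le_or_gt 0 (α * m - α * (1 - k) - c) with hY | hY
    · have hX : 0 ≤ m - (1 - k) + c := by
        by_contra hX'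
        push_neg at hX'
        nlinarith [mul_neg_of_pos_of_neg hα hX']
      exact case1 hX hY
    · rcases le_or_gt 0 (α * m + β * (α * (1 - k) + c)) with hW | hW
      · exact case4 (by linarith) hY.le hW
      · have hZ : m - β * (c - (1 - k)) ≤ 0 := by
          by_contra hZ'
          push_neg at hZ'
          nlinarith [mul_pos hα hZ',
            mul_pos (mul_pos hβ (show (0:ℝ) < 1 + α by linarith)) hc0]
        exact case2 hZ hW.le

/-- If `x₁ x₂ x₃ x₄` are four distinct points of the plane in convex position
in this cyclic order (the open diagonals `(x₁, x₃)` and `(x₂, x₄)` cross), `C` is a convex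
set, `λ ≥ 1` and `t ∈ ℝ²`, then it cannot happen that `C` contains exactly `x₁, x₃` of the
four points while `λC + t` contains exactly `x₂, x₄`. -/
theorem no_alternating_homothets
    (x₁ x₂ x₃ x₄ : EuclideanSpace ℝ (Fin 2))
    (hdist : x₁ ≠ x₂ ∧ x₁ ≠ x₃ ∧ x₁ ≠ x₄ ∧ x₂ ≠ x₃ ∧ x₂ ≠ x₄ ∧ x₃ ≠ x₄)
    (hcross : ∃ p : EuclideanSpace ℝ (Fin 2),
      p ∈ openSegment ℝ x₁ x₃ ∧ p ∈ openSegment ℝ x₂ x₄)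
    (C : Set (EuclideanSpace ℝ (Fin 2))) (hC : Convex ℝ C)
    (lam : ℝ) (hlam : 1 ≤ lam) (t : EuclideanSpace ℝ (Fin 2)) :
    ¬ (x₁ ∈ C ∧ x₃ ∈ C ∧ x₂ ∉ C ∧ x₄ ∉ C ∧
       x₂ ∈ lam • C + {t} ∧ x₄ ∈ lam • C + {t} ∧
       x₁ ∉ lam • C + {t} ∧ x₃ ∉ lam • C + {t}) := by
  rintro ⟨h1C, h3C, h2C, h4C, h2D, h4D, h1D, h3D⟩
  obtain ⟨p, hp13, hp24⟩ := hcross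
  obtain ⟨a, b, ha, hb, hab, hp1⟩ := hp13
  obtain ⟨a', b', ha', hb', hab', hp2⟩ := hp24
  have hb0 : b ≠ 0 := ne_of_gt hb
  have hb0' : b' ≠ 0 := ne_of_gt hb'
  obtain ⟨α, hαdef⟩ : ∃ α : ℝ, α = a / b := ⟨_, rfl⟩
  obtain ⟨β, hβdef⟩ : ∃ β : ℝ, β = a' / b' := ⟨_, rfl⟩
  have hα : 0 < α := hαdef ▸ div_pos ha hb
  have hβ : 0 < β := hβdef ▸ div_pos ha' hb'
  -- representations of x₃, x₄
  have hx3 : x₃ = p - α • (x₁ - p) := by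
    have h3 : b • x₃ = p - a • x₁ := eq_sub_of_add_eq' hp1
    have h3' : x₃ = b⁻¹ • (p - a • x₁) := by
      rw [← h3, smul_smul, inv_mul_cancel₀ hb0, one_smul]
    rw [h3', hαdef]
    match_scalars <;> field_simp <;> try linarith
  have hx4 : x₄ = p - β • (x₂ - p) := by
    have h4 : b' • x₄ = p - a' • x₂ := eq_sub_of_add_eq' hp2
    have h4' : x₄ = b'⁻¹ • (p - a' • x₂) := by
      rw [← h4, smul_smul, inv_mul_cancel₀ hb0', one_smul]
    rw [h4', hβdef]
    match_scalars <;> field_simp <;> try linarith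
  have hX0 : x₁ - p ≠ 0 := by
    intro h0
    have hx1p : x₁ = p := by rwa [sub_eq_zero] at h0
    have h3p : x₃ = p := by rw [hx3, h0, smul_zero, sub_zero]
    exact hdist.2.1 (hx1p.trans h3p.symm)
  -- scalars
  have hlam0 : (0:ℝ) < lam := lt_of_lt_of_le one_pos hlam
  obtain ⟨k, hkdef⟩ : ∃ k : ℝ, k = lam⁻¹ := ⟨_, rfl⟩
  have hk0 : 0 < k := hkdef ▸ inv_pos.mpr hlam0
  have hkl : k * lam = 1 := hkdef ▸ inv_mul_cancel₀ (ne_of_gt hlam0)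
  have hlk : lam * k = 1 := hkdef ▸ mul_inv_cancel₀ (ne_of_gt hlam0)
  have hk1 : k ≤ 1 := by nlinarith
  -- pulled-back points
  have hy1C : k • (x₁ - t) ∉ C := by
    intro h
    apply h1D
    have h' : lam • (k • (x₁ - t)) + t ∈ lam • C + {t} :=
      Set.add_mem_add (Set.smul_mem_smul_set h) (Set.mem_singleton t)
    rwa [smul_smul, hlk, one_smul, sub_add_cancel] at h'
  have hy3C : k • (x₃ - t) ∉ C := by
    intro h
    apply h3D
    have h' : lam • (k • (x₃ - t)) + t ∈ lam • C + {t} :=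
      Set.add_mem_add (Set.smul_mem_smul_set h) (Set.mem_singleton t)
    rwa [smul_smul, hlk, one_smul, sub_add_cancel] at h'
  have hpull : ∀ z : EuclideanSpace ℝ (Fin 2), z ∈ lam • C + {t} → k • (z - t) ∈ C := by
    intro z hz
    obtain ⟨u, hu, v, hv, huv⟩ := Set.mem_add.mp hz
    obtain ⟨w, hw, hwu⟩ := Set.mem_smul_set.mp hu
    have hvt : v = t := hv
    have hz' : lam • w + t = z := by rw [hwu, ← hvt]; exact huv
    have heq : k • (z - t) = w := by
      rw [← hz', add_sub_cancel_right, smul_smul, hkl, one_smul]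
    rwa [heq]
  have hy2C : k • (x₂ - t) ∈ C := hpull x₂ h2D
  have hy4C : k • (x₄ - t) ∈ C := hpull x₄ h4D
  by_cases hind : ∀ γ : ℝ, γ • (x₁ - p) ≠ x₂ - p
  · -- independent case
    have hli : LinearIndependent ℝ ![x₂ - p, x₁ - p] := by
      rw [linearIndependent_fin2]
      constructor
      · simpa using hX0
      · intro γ; simpa using hind γ
    have hsp : Submodule.span ℝ (Set.range ![x₂ - p, x₁ - p]) = ⊤ :=
      hli.span_eq_top_of_card_eq_finrank (by simp)
    have hmem : (k • t + (1 - k) • p) ∈ Submodule.span ℝ (Set.range ![x₂ - p, x₁ - p]) := by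
      rw [hsp]; trivial
    rw [Submodule.mem_span_range_iff_exists_fun] at hmem
    obtain ⟨coef, hcoef⟩ := hmem
    rw [Fin.sum_univ_two] at hcoef
    simp only [Matrix.cons_val_zero, Matrix.cons_val_one, Matrix.head_cons] at hcoef
    obtain ⟨c, m, hkt⟩ : ∃ c m : ℝ,
        k • t = (-c) • (x₁ - p) + (-m) • (x₂ - p) - (1 - k) • p := by
      refine ⟨-(coef 1), -(coef 0), ?_⟩
      rw [neg_neg, neg_neg, eq_sub_of_add_eq hcoef.symm]
      abel
    -- representations of the pulled-back points
    have hr1 : k • (x₁ - t) = p + (k + c) • (x₁ - p) + m • (x₂ - p) := by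
      rw [smul_sub, hkt]; module
    have hr2 : k • (x₂ - t) = p + c • (x₁ - p) + (k + m) • (x₂ - p) := by
      rw [smul_sub, hkt]; module
    have hr3 : k • (x₃ - t) = p + (c - α * k) • (x₁ - p) + m • (x₂ - p) := by
      rw [smul_sub, hkt, hx3]; module
    have hr4 : k • (x₄ - t) = p + c • (x₁ - p) + (m - β * k) • (x₂ - p) := by
      rw [smul_sub, hkt, hx4]; module
    rw [hr1] at hy1C
    rw [hr2] at hy2C
    rw [hr3] at hy3C
    rw [hr4] at hy4C
    rw [show x₁ = p + (x₁ - p) by abel] at h1C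
    rw [show x₂ = p + (x₂ - p) by abel] at h2C
    rw [hx3] at h3C
    rw [hx4] at h4C
    exact core_indep hC hα hβ hk0 hk1 h1C h3C hy2C hy4C h2C h4C hy1C hy3C
  · -- collinear case
    rcases not_forall.mp hind with ⟨γ, hγ'⟩
    rw [not_ne_iff] at hγ'
    have hx2 : x₂ = p + γ • (x₁ - p) := by rw [hγ']; abel
    have hDconv : Convex ℝ (lam • C + {t}) := (hC.smul lam).add (convex_singleton t)
    rcases le_or_gt γ 1 with hγ1 | hγ1
    · rcases le_or_gt (-α) γ with hγ2 | hγ2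
      · -- x₂ ∈ C
        apply h2C
        refine mem_of_comb3 hC h1C h3C h3C (w1 := γ + α) (w2 := 1 - γ) (w3 := 0)
          (d := 1 + α) (by linarith) (by linarith) le_rfl (by linarith) (by ring) ?_
        rw [hx3, hx2]; module
      · -- x₃ ∈ D
        apply h3D
        refine mem_of_comb3 hDconv h2D h4D h4D (w1 := α - β * γ) (w2 := -γ - α) (w3 := 0)
          (d := -γ * (1 + β)) ?_ (by linarith) le_rfl ?_ (by ring) ?_
        · nlinarith [mul_neg_of_pos_of_neg hβ (show γ < 0 by linarith)]
        · nlinarith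
        · rw [hx4, hx2, hx3]; module
    · -- x₁ ∈ D
      apply h1D
      refine mem_of_comb3 hDconv h2D h4D h4D (w1 := 1 + β * γ) (w2 := γ - 1) (w3 := 0)
        (d := γ * (1 + β)) ?_ (by linarith) le_rfl ?_ (by ring) ?_
      · nlinarith
      · nlinarith
      · rw [hx4, hx2, show x₁ = p + (x₁ - p) by abel]; module
end

section
/- For every M ∈ ℕ there exist a convex body K ⊆ ℝ³, a finite set V ⊆ ℝ³, and a set X ⊆ ℝ³ with |X| = M such that the family of translates {K + v : v ∈ V} shatters X; that is, for every subset X' ⊆ X there is v ∈ V with X ∩ (K + v) = X'. -/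
open Pointwise Metric Function

/-!
Put the points `xᵢ = (aᵢ, -aᵢ², 0)` on a parabola in one coordinate plane and, for every set `S`
of indices, a vector `b_S = (c_S, 0, -c_S²)` on a parabola in another, with distinct positive
`aᵢ` and `c_S`. The functional `w ↦ 2 aⱼ c_T w₀ + c_T w₁ + aⱼ w₂` is maximised over the points
`xᵢ + b_S` exactly at `(i, S) = (j, T)`, so `xⱼ + b_T` lies outside the convex hull of
`{xᵢ + b_S : i ∈ S}` whenever `j ∉ T`. These finitely many points keep a positive distance from the
compact hull, so a small closed thickening `K` of the hull is a convex body for which `K - b_T`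
contains exactly the points `xᵢ` with `i ∈ T`.
-/

def TranslatesShatter {E : Type*} [Add E] (K : Set E) (V X : Finset E) : Prop :=
  ∀ X' ⊆ X, ∃ v ∈ V, (↑X : Set E) ∩ (K + {v}) = ↑X'

theorem TranslatesShatter.mono {E : Type*} [Add E] {K : Set E} {V X Y : Finset E}
    (h : TranslatesShatter K V X) (hYX : Y ⊆ X) : TranslatesShatter K V Y := by
  intro Y' hY'
  obtain ⟨v, hv, hX⟩ := h Y' (hY'.trans hYX)
  refine ⟨v, hv, ?_⟩
  rw [← Set.inter_eq_left.2 (Finset.coe_subset.2 hYX), Set.inter_assoc, hX,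
    Set.inter_eq_right.2 (Finset.coe_subset.2 hY')]

theorem translatesShatter_image_of_add_mem_iff {E ι : Type*} [AddGroup E] [DecidableEq E]
    [Fintype ι] {K : Set E} (x : ι → E) (b : Finset ι → E) (hK : ∀ j S, x j + b S ∈ K ↔ j ∈ S) :
    TranslatesShatter K (Finset.univ.image fun S => -b S) (Finset.univ.image x) := by
  intro X' hX'
  refine ⟨-b {i | x i ∈ X'}, Finset.mem_image_of_mem _ (Finset.mem_univ _), ?_⟩
  ext y
  simp only [Set.add_singleton, Set.image_add_right, neg_neg, Set.mem_inter_iff, Set.mem_preimage,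
    Finset.coe_image, Finset.coe_univ, Set.image_univ, Set.mem_range, Finset.mem_coe]
  constructor
  · rintro ⟨⟨j, rfl⟩, hj⟩
    simpa using (hK _ _).1 hj
  · intro hy
    obtain ⟨j, -, rfl⟩ := Finset.mem_image.1 (hX' hy)
    exact ⟨⟨j, rfl⟩, (hK _ _).2 (by simpa using hy)⟩

theorem notMem_convexHull_of_forall_lt {E : Type*} [AddCommGroup E] [Module ℝ E]
    (f : E →ₗ[ℝ] ℝ) {s : Set E} {p : E} (h : ∀ q ∈ s, f q < f p) : p ∉ convexHull ℝ s :=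
  fun hp => lt_irrefl (f p) (convexHull_min h (convex_halfSpace_lt f.isLinear (f p)) hp)

theorem exists_add_mem_cthickening_convexHull_iff {E ι κ : Type*} [NormedAddCommGroup E]
    [NormedSpace ℝ E] [Finite ι] [Finite κ] (x : ι → E) (b : κ → E) (s : Set (ι × κ))
    (hsep : ∀ j T, ∃ f : E →ₗ[ℝ] ℝ, (∀ i ≠ j, f (x i) < f (x j)) ∧ ∀ S ≠ T, f (b S) < f (b T)) :
    ∃ r > 0, ∀ j T,
      x j + b T ∈ cthickening r (convexHull ℝ ((fun q => x q.1 + b q.2) '' s)) ↔ (j, T) ∈ s := by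
  set F : ι × κ → E := fun q => x q.1 + b q.2
  have hsub : convexHull ℝ (F '' s) ⊆ (F '' sᶜ)ᶜ := by
    rintro _ hp ⟨⟨j, T⟩, hjT, rfl⟩
    obtain ⟨f, hx, hb⟩ := hsep j T
    refine notMem_convexHull_of_forall_lt f ?_ hp
    rintro _ ⟨⟨i, S⟩, hiS, rfl⟩
    simp only [F, map_add]
    obtain rfl | hij := eq_or_ne i j
    · linarith [hb S (by rintro rfl; exact hjT hiS)]
    · obtain rfl | hST := eq_or_ne S T
      · linarith [hx i hij]
      · linarith [hx i hij, hb S hST]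
  obtain ⟨r, hr, hr_sub⟩ := (s.toFinite.image F).isCompact_convexHull (𝕜 := ℝ)
    |>.exists_cthickening_subset_open (sᶜ.toFinite.image F).isClosed.isOpen_compl hsub
  refine ⟨r, hr, fun j T => ⟨fun h => ?_, fun h => ?_⟩⟩
  · by_contra hjT
    exact hr_sub h ⟨(j, T), hjT, rfl⟩
  · exact self_subset_cthickening _ (subset_convexHull ℝ _ ⟨(j, T), h, rfl⟩)

theorem Set.Nonempty.interior_cthickening {α : Type*} [PseudoMetricSpace α] {s : Set α}
    (hs : s.Nonempty) {r : ℝ} (hr : 0 < r) : (interior (cthickening r s)).Nonempty :=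
  (thickening_nonempty_iff.2 ⟨hr, hs⟩).mono (thickening_subset_interior_cthickening r s)

theorem exists_injective_pos (α : Type*) [Countable α] :
    ∃ a : α → ℝ, Injective a ∧ ∀ i, 0 < a i := by
  obtain ⟨f, hf⟩ := Countable.exists_injective_nat α
  exact ⟨fun i => f i + 1, fun i j h => hf (by exact_mod_cast add_right_cancel h),
    fun i => by positivity⟩

local notation "ℝ³" => EuclideanSpace ℝ (Fin 3)

def parabolaXY (t : ℝ) : ℝ³ := !₂[t, -t ^ 2, 0]

def parabolaXZ (t : ℝ) : ℝ³ := !₂[t, 0, -t ^ 2]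

noncomputable def probe (s u : ℝ) : ℝ³ →ₗ[ℝ] ℝ := innerₛₗ ℝ !₂[2 * s * u, u, s]

theorem parabolaXY_injective : Injective parabolaXY := fun s t h => by
  simpa [parabolaXY] using congrArg (· 0) h

theorem probe_parabolaXY (s u t : ℝ) :
    probe s u (parabolaXY t) = u * (s ^ 2 - (t - s) ^ 2) := by
  simp only [probe, parabolaXY, innerₛₗ_apply_apply, PiLp.inner_apply, RCLike.inner_apply,
    Real.ringHom_apply, Fin.sum_univ_three, Matrix.cons_val]
  ring

theorem probe_parabolaXZ (s u t : ℝ) :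
    probe s u (parabolaXZ t) = s * (u ^ 2 - (t - u) ^ 2) := by
  simp only [probe, parabolaXZ, innerₛₗ_apply_apply, PiLp.inner_apply, RCLike.inner_apply,
    Real.ringHom_apply, Fin.sum_univ_three, Matrix.cons_val]
  ring

theorem probe_parabolaXY_lt_self {s u t : ℝ} (hu : 0 < u) (ht : t ≠ s) :
    probe s u (parabolaXY t) < probe s u (parabolaXY s) := by
  rw [probe_parabolaXY, probe_parabolaXY, sub_self, zero_pow two_ne_zero, sub_zero]
  exact mul_lt_mul_of_pos_left (sub_lt_self _ (sq_pos_of_ne_zero (sub_ne_zero.2 ht))) hu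

theorem probe_parabolaXZ_lt_self {s u t : ℝ} (hs : 0 < s) (ht : t ≠ u) :
    probe s u (parabolaXZ t) < probe s u (parabolaXZ u) := by
  rw [probe_parabolaXZ, probe_parabolaXZ, sub_self, zero_pow two_ne_zero, sub_zero]
  exact mul_lt_mul_of_pos_left (sub_lt_self _ (sq_pos_of_ne_zero (sub_ne_zero.2 ht))) hs

theorem exists_convexBody_translatesShatter (ι : Type*) [Fintype ι] [Nonempty ι] :
    ∃ K : Set ℝ³, IsCompact K ∧ Convex ℝ K ∧ (interior K).Nonempty ∧
      ∃ V X : Finset ℝ³, X.card = Fintype.card ι ∧ TranslatesShatter K V X := by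
  classical
  obtain ⟨a, ha, ha0⟩ := exists_injective_pos ι
  obtain ⟨c, hc, hc0⟩ := exists_injective_pos (Finset ι)
  set s : Set (ι × Finset ι) := {q | q.1 ∈ q.2}
  obtain ⟨r, hr, hK⟩ := exists_add_mem_cthickening_convexHull_iff (parabolaXY ∘ a)
    (parabolaXZ ∘ c) s fun j T => ⟨probe (a j) (c T),
      fun i hij => probe_parabolaXY_lt_self (hc0 T) (ha.ne hij),
      fun S hST => probe_parabolaXZ_lt_self (ha0 j) (hc.ne hST)⟩
  obtain ⟨i₀⟩ := ‹Nonempty ι›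
  have hs : s.Nonempty := ⟨(i₀, {i₀}), Finset.mem_singleton_self i₀⟩
  refine ⟨_, ((s.toFinite.image _).isCompact_convexHull (𝕜 := ℝ)).cthickening,
    (convex_convexHull ℝ _).cthickening r, (hs.image _).convexHull.interior_cthickening hr,
    _, _, Finset.card_image_of_injective _ (parabolaXY_injective.comp ha),
    translatesShatter_image_of_add_mem_iff _ _ hK⟩

/-- For every `M` there are a convex body `K ⊆ ℝ³`, a finite set `V ⊆ ℝ³` and
a set `X` of `M` points such that the translates `{K + v : v ∈ V}` shatter `X`. -/
theorem exists_translates_shattering_M_points (M : ℕ) :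
    ∃ K : Set (EuclideanSpace ℝ (Fin 3)),
      IsCompact K ∧ Convex ℝ K ∧ (interior K).Nonempty ∧
      ∃ V : Finset (EuclideanSpace ℝ (Fin 3)),
        ∃ X : Finset (EuclideanSpace ℝ (Fin 3)), X.card = M ∧
          ∀ X' ⊆ X, ∃ v ∈ V,
            (↑X : Set (EuclideanSpace ℝ (Fin 3))) ∩ (K + {v}) = ↑X' := by
  -- `M + 1` points, so that the hull defining `K` is nonempty; shattering passes to subsets.
  obtain ⟨K, hK, hKconv, hKint, V, X, hX, hshatter⟩ :=
    exists_convexBody_translatesShatter (Fin (M + 1))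
  obtain ⟨Y, hYX, hY⟩ := Finset.exists_subset_card_eq (show M ≤ X.card by simp [hX])
  exact ⟨K, hK, hKconv, hKint, V, Y, hY, hshatter.mono hYX⟩
end
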